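/- arXiv:cs/0203003 — 17 statements merged into one kernel-verified Lean document; each statement's English description precedes it below -/
import Mathlib

section
/- Let C : Set L → Set L be an operation. The following are equivalent: (1) there exists an antitonic operator S : Set L → Set L such that C(X) = Cn(X ∪ S(X)) for every X ⊆ L; (2) for every X ⊆ L, C(X) = Cn(X ∪ ⋂_{Y ⊆ X} C(Y)); (3) C is supraclassical, left-absorbing, deductive and compact. -/
open Set

namespace DedNonmon

variable {L : Type*}

/-- `Cn X ⊆ C X` for all `X`. -/
def Supra (Cn C : Set L → Set L) : Prop := ∀ X : Set L, Cn X ⊆ C X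

/-- `Cn (C X) = C X` for all `X`. -/
def LeftAb (Cn C : Set L → Set L) : Prop := ∀ X : Set L, Cn (C X) = C X

/-- `Cn X = Cn Y` implies `C X = C Y`. -/
def RightAb (Cn C : Set L → Set L) : Prop := ∀ X Y : Set L, Cn X = Cn Y → C X = C Y

/-- `Y ⊆ X` implies `C X ⊆ Cn (X ∪ C Y)`. -/
def Deduc (Cn C : Set L → Set L) : Prop := ∀ X Y : Set L, Y ⊆ X → C X ⊆ Cn (X ∪ C Y)

/-- `X ⊆ Y` implies `C Y ⊆ C X`. -/
def Antitonic (C : Set L → Set L) : Prop := ∀ X Y : Set L, X ⊆ Y → C Y ⊆ C X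

/-- `Y ⊆ Cn (C X)` implies `Cn (C (X ∪ Y)) = Cn (C X)`. -/
def Cumul (Cn C : Set L → Set L) : Prop :=
  ∀ X Y : Set L, Y ⊆ Cn (C X) → Cn (C (X ∪ Y)) = Cn (C X)

/-- Compactness for (possibly nonmonotonic) operations. -/
def CompactOp (C : Set L → Set L) : Prop :=
  ∀ (X : Set L) (x : L), x ∈ C X →
    ∃ A : Set L, A.Finite ∧ A ⊆ X ∧ ∀ Y : Set L, A ⊆ Y → Y ⊆ X → x ∈ C Y

/-- Supracompactness (Freund). -/
def SupracompactOp (C : Set L → Set L) : Prop :=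
  ∀ (X : Set L) (x : L), x ∈ C X →
    ∃ A : Set L, A.Finite ∧ A ⊆ X ∧ ∀ Y : Set L, A ⊆ Y → Y ⊆ C X → x ∈ C Y

/-- Strong co-compactness. -/
def StrongCoCompact (C : Set L → Set L) : Prop :=
  ∀ (X : Set L) (x : L), x ∉ C X → ∃ A : Set L, A.Finite ∧ A ⊆ X ∧ x ∉ C A

/-- Co-compactness. -/
def CoCompact (Cn C : Set L → Set L) : Prop :=
  ∀ (X : Set L) (x : L), x ∉ C X → ∃ A : Set L, A.Finite ∧ A ⊆ Cn X ∧ x ∉ C A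

/-- Finitary supraclassicality. -/
def FinSupra (Cn F : Set L → Set L) : Prop := ∀ A : Set L, A.Finite → Cn A ⊆ F A

/-- Finitary left absorption. -/
def FinLeftAb (Cn F : Set L → Set L) : Prop := ∀ A : Set L, A.Finite → Cn (F A) = F A

/-- Finitary right absorption. -/
def FinRightAb (Cn F : Set L → Set L) : Prop :=
  ∀ A B : Set L, A.Finite → B.Finite → Cn A = Cn B → F A = F B

/-- Finitary deductivity. -/
def FinDeduc (Cn F : Set L → Set L) : Prop :=
  ∀ A B : Set L, A.Finite → B.Finite → B ⊆ A → F A ⊆ Cn (A ∪ F B)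

/-- Finitary cumulativity. -/
def FinCumul (Cn F : Set L → Set L) : Prop :=
  ∀ A B : Set L, A.Finite → B.Finite → B ⊆ Cn (F A) → Cn (F (A ∪ B)) = Cn (F A)

/-!
`D X = ⋂_{Y ⊆ X} C Y` (`lowerInter C X`) is antitonic, and any antitonic `S` with
`C X = Cn (X ∪ S X)` satisfies `S X ⊆ D X ⊆ C X`, which gives (1) ⇔ (2). For (3) ⇒ (2),
compactness reduces `x ∈ C X` to a finite `A ⊆ X`; internalising `A` by iterated implications
gives a formula `A → x` which, by deductivity and left absorption, lies in `C Y` for every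
`Y ⊆ X`, hence in `D X`, and modus ponens with `A ⊆ X` recovers `x ∈ Cn (X ∪ D X)`.
-/

def lowerInter (C : Set L → Set L) (X : Set L) : Set L := ⋂ (Y : Set L) (_ : Y ⊆ X), C Y

section LowerInter

variable {Cn C : Set L → Set L} {X : Set L}

theorem mem_lowerInter {x : L} : x ∈ lowerInter C X ↔ ∀ Y, Y ⊆ X → x ∈ C Y := by
  simp [lowerInter]

theorem lowerInter_subset : lowerInter C X ⊆ C X :=
  fun _ hx => mem_lowerInter.1 hx X subset_rfl

theorem antitonic_lowerInter : Antitonic (lowerInter C) :=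
  fun _ _ hXY _ hx => mem_lowerInter.2 fun Z hZ => mem_lowerInter.1 hx Z (hZ.trans hXY)

theorem subset_lowerInter_of_antitonic {S : Set L → Set L} (hS : Antitonic S)
    (hSC : ∀ Y, S Y ⊆ C Y) : S X ⊆ lowerInter C X :=
  fun _ hs => mem_lowerInter.2 fun Y hY => hSC Y (hS Y X hY hs)

theorem eq_cn_union_lowerInter (hMono : ∀ X Y : Set L, X ⊆ Y → Cn X ⊆ Cn Y)
    (hClosed : Cn (C X) = C X) (hX : X ⊆ C X) (hle : C X ⊆ Cn (X ∪ lowerInter C X)) :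
    C X = Cn (X ∪ lowerInter C X) := by
  refine hle.antisymm ?_
  calc Cn (X ∪ lowerInter C X) ⊆ Cn (C X) := hMono _ _ (union_subset hX lowerInter_subset)
    _ = C X := hClosed

end LowerInter

/-- The deduction theorem, iterated over a finite set of premises. -/
theorem exists_mem_cn_iff_mem_cn_union {Cn : Set L → Set L}
    (hImp : ∃ imp : L → L → L, ∀ (a b : L) (X : Set L), b ∈ Cn (X ∪ {a}) ↔ imp a b ∈ Cn X)
    {A : Set L} (hA : A.Finite) (b : L) :
    ∃ φ : L, ∀ X : Set L, b ∈ Cn (X ∪ A) ↔ φ ∈ Cn X := by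
  obtain ⟨imp, himp⟩ := hImp
  induction A, hA using Set.Finite.induction_on with
  | empty => exact ⟨b, fun X => by rw [union_empty]⟩
  | @insert a A _ _ ih =>
    obtain ⟨φ, hφ⟩ := ih
    refine ⟨imp a φ, fun X => ?_⟩
    rw [← himp, ← hφ, union_insert, ← union_singleton, union_right_comm]

section Characterization

variable {Cn C : Set L → Set L}

theorem eq_cn_union_lowerInter_of_antitonic (hIncl : ∀ X : Set L, X ⊆ Cn X)
    (hMono : ∀ X Y : Set L, X ⊆ Y → Cn X ⊆ Cn Y) (hIdem : ∀ X : Set L, Cn (Cn X) = Cn X)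
    {S : Set L → Set L} (hS : Antitonic S) (hC : ∀ X, C X = Cn (X ∪ S X)) (X : Set L) :
    C X = Cn (X ∪ lowerInter C X) := by
  have hSC : ∀ Y, S Y ⊆ C Y := fun Y => hC Y ▸ subset_union_right.trans (hIncl _)
  refine eq_cn_union_lowerInter hMono (by rw [hC, hIdem]) ?_ ?_
  · exact hC X ▸ subset_union_left.trans (hIncl _)
  · rw [hC]
    exact hMono _ _ (union_subset_union_right X (subset_lowerInter_of_antitonic hS hSC))

theorem compactOp_of_eq_cn_union_lowerInter
    (hMono : ∀ X Y : Set L, X ⊆ Y → Cn X ⊆ Cn Y)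
    (hCnCpt : ∀ (X : Set L) (x : L), x ∈ Cn X → ∃ A : Set L, A.Finite ∧ A ⊆ X ∧ x ∈ Cn A)
    (hC : ∀ X, C X = Cn (X ∪ lowerInter C X)) : CompactOp C := by
  intro X x hx
  rw [hC] at hx
  obtain ⟨B, hBfin, hBsub, hxB⟩ := hCnCpt _ _ hx
  -- The premises of `B` outside `X` lie in `lowerInter C X`, which only grows as `X` shrinks.
  refine ⟨B ∩ X, hBfin.subset inter_subset_left, inter_subset_right, fun Y hAY hYX => ?_⟩
  rw [hC]
  refine hMono B _ (fun b hb => ?_) hxB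
  rcases hBsub hb with hbX | hbD
  · exact Or.inl (hAY ⟨hb, hbX⟩)
  · exact Or.inr (antitonic_lowerInter Y X hYX hbD)

theorem subset_cn_union_lowerInter (hIncl : ∀ X : Set L, X ⊆ Cn X)
    (hMono : ∀ X Y : Set L, X ⊆ Y → Cn X ⊆ Cn Y)
    (hImp : ∃ imp : L → L → L, ∀ (a b : L) (X : Set L), b ∈ Cn (X ∪ {a}) ↔ imp a b ∈ Cn X)
    (hSupra : Supra Cn C) (hLeftAb : LeftAb Cn C) (hDeduc : Deduc Cn C) (hCpt : CompactOp C)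
    (X : Set L) : C X ⊆ Cn (X ∪ lowerInter C X) := by
  intro x hx
  obtain ⟨A, hAfin, hAX, hA⟩ := hCpt X x hx
  obtain ⟨φ, hφ⟩ := exists_mem_cn_iff_mem_cn_union hImp hAfin x
  have hφD : φ ∈ lowerInter C X := by
    refine mem_lowerInter.2 fun Y hYX => ?_
    have hxYA : x ∈ C (Y ∪ A) := hA _ subset_union_right (union_subset hYX hAX)
    have hYC : Y ∪ A ∪ C Y ⊆ C Y ∪ A := by
      rintro y ((hy | hy) | hy)
      · exact Or.inl ((hIncl Y).trans (hSupra Y) hy)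
      · exact Or.inr hy
      · exact Or.inl hy
    rw [← hLeftAb Y, ← hφ]
    exact hMono _ _ hYC (hDeduc _ Y subset_union_left hxYA)
  have hx' : x ∈ Cn (X ∪ lowerInter C X ∪ A) := (hφ _).2 (hIncl _ (Or.inr hφD))
  rwa [union_eq_left.2 (hAX.trans subset_union_left)] at hx'

end Characterization

theorem stmt0 (Cn C : Set L → Set L)
    (hIncl : ∀ X : Set L, X ⊆ Cn X)
    (hMono : ∀ X Y : Set L, X ⊆ Y → Cn X ⊆ Cn Y)
    (hIdem : ∀ X : Set L, Cn (Cn X) = Cn X)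
    (hCnCpt : ∀ (X : Set L) (x : L), x ∈ Cn X → ∃ A : Set L, A.Finite ∧ A ⊆ X ∧ x ∈ Cn A)
    (hImp : ∃ imp : L → L → L, ∀ (a b : L) (X : Set L), b ∈ Cn (X ∪ {a}) ↔ imp a b ∈ Cn X)
 :
    ((∃ S : Set L → Set L, Antitonic S ∧ ∀ X : Set L, C X = Cn (X ∪ S X)) ↔
        ∀ X : Set L, C X = Cn (X ∪ ⋂ (Y : Set L) (_ : Y ⊆ X), C Y)) ∧
    ((∀ X : Set L, C X = Cn (X ∪ ⋂ (Y : Set L) (_ : Y ⊆ X), C Y)) ↔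
        (Supra Cn C ∧ LeftAb Cn C ∧ Deduc Cn C ∧ CompactOp C)) := by
  refine ⟨⟨fun ⟨S, hS, hC⟩ => eq_cn_union_lowerInter_of_antitonic hIncl hMono hIdem hS hC,
    fun hC => ⟨lowerInter C, antitonic_lowerInter, hC⟩⟩, ⟨fun hC => ?_, fun hC X => ?_⟩⟩
  · refine ⟨fun X => ?_, fun X => ?_, fun X Y hYX => ?_, compactOp_of_eq_cn_union_lowerInter
      hMono hCnCpt hC⟩
    · rw [hC X]
      exact hMono _ _ subset_union_left
    · rw [hC X, hIdem]
    · rw [hC X]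
      exact hMono _ _ (union_subset_union_right X fun _ hd => mem_lowerInter.1 hd Y hYX)
  · obtain ⟨hSupra, hLeftAb, hDeduc, hCpt⟩ := hC
    exact eq_cn_union_lowerInter hMono (hLeftAb X) ((hIncl X).trans (hSupra X))
      (subset_cn_union_lowerInter hIncl hMono hImp hSupra hLeftAb hDeduc hCpt X)

end DedNonmon
end

section
/- If C : Set L → Set L satisfies C(X) = Cn(X ∪ S(X)) for every X ⊆ L, where S : Set L → Set L is antitonic, then C is supraclassical, left-absorbing, deductive and compact. -/
open Set

namespace DedNonmon

variable {L : Type*}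

section ExpansionOfAntitonic

variable {Cn C S : Set L → Set L}

theorem cn_subset_of_subset_cn (hMono : ∀ X Y : Set L, X ⊆ Y → Cn X ⊆ Cn Y)
    (hIdem : ∀ X : Set L, Cn (Cn X) = Cn X) {X Y : Set L} (h : X ⊆ Cn Y) : Cn X ⊆ Cn Y :=
  hIdem Y ▸ hMono _ _ h

theorem supra_of_eq_cn_union (hMono : ∀ X Y : Set L, X ⊆ Y → Cn X ⊆ Cn Y)
    (hC : ∀ X : Set L, C X = Cn (X ∪ S X)) : Supra Cn C := fun X =>
  hC X ▸ hMono _ _ subset_union_left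

theorem leftAb_of_eq_cn_union (hIdem : ∀ X : Set L, Cn (Cn X) = Cn X)
    (hC : ∀ X : Set L, C X = Cn (X ∪ S X)) : LeftAb Cn C := fun X => by
  rw [hC, hIdem]

theorem deduc_of_eq_cn_union (hIncl : ∀ X : Set L, X ⊆ Cn X)
    (hMono : ∀ X Y : Set L, X ⊆ Y → Cn X ⊆ Cn Y) (hIdem : ∀ X : Set L, Cn (Cn X) = Cn X)
    (hS : Antitonic S) (hC : ∀ X : Set L, C X = Cn (X ∪ S X)) : Deduc Cn C := by
  intro X Y hYX
  have hSX : S X ⊆ C Y := hC Y ▸ (hS Y X hYX).trans (subset_union_right.trans (hIncl _))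
  rw [hC X]
  exact cn_subset_of_subset_cn hMono hIdem
    ((union_subset_union_right X hSX).trans (hIncl _))

theorem compactOp_of_eq_cn_union (hMono : ∀ X Y : Set L, X ⊆ Y → Cn X ⊆ Cn Y)
    (hCnCpt : ∀ (X : Set L) (x : L), x ∈ Cn X → ∃ A : Set L, A.Finite ∧ A ⊆ X ∧ x ∈ Cn A)
    (hS : Antitonic S) (hC : ∀ X : Set L, C X = Cn (X ∪ S X)) : CompactOp C := by
  intro X x hx
  rw [hC] at hx
  obtain ⟨A, hAfin, hAsub, hxA⟩ := hCnCpt _ _ hx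
  -- The part of `A` outside `X` lies in `S X`, which antitonicity puts inside every `S Y`, `Y ⊆ X`.
  refine ⟨A ∩ X, hAfin.inter_of_left X, inter_subset_right, fun Y hAY hYX => ?_⟩
  have hA : A ⊆ Y ∪ S Y := fun a ha =>
    (hAsub ha).imp (fun haX => hAY ⟨ha, haX⟩) (fun haS => hS Y X hYX haS)
  exact hC Y ▸ hMono _ _ hA hxA

end ExpansionOfAntitonic

theorem stmt1 (Cn C S : Set L → Set L)
    (hIncl : ∀ X : Set L, X ⊆ Cn X)
    (hMono : ∀ X Y : Set L, X ⊆ Y → Cn X ⊆ Cn Y)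
    (hIdem : ∀ X : Set L, Cn (Cn X) = Cn X)
    (hCnCpt : ∀ (X : Set L) (x : L), x ∈ Cn X → ∃ A : Set L, A.Finite ∧ A ⊆ X ∧ x ∈ Cn A)
    (hS : Antitonic S)
    (hC : ∀ X : Set L, C X = Cn (X ∪ S X)) :
    Supra Cn C ∧ LeftAb Cn C ∧ Deduc Cn C ∧ CompactOp C :=
  ⟨supra_of_eq_cn_union hMono hC, leftAb_of_eq_cn_union hIdem hC,
    deduc_of_eq_cn_union hIncl hMono hIdem hS hC, compactOp_of_eq_cn_union hMono hCnCpt hS hC⟩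

end DedNonmon
end

section
/- If C : Set L → Set L is supraclassical, left-absorbing, deductive and compact, then for every X ⊆ L, C(X) = Cn(X ∪ ⋂_{Y ⊆ X} C(Y)). -/
/-!
By compactness, `x ∈ C X` already lies in `C Y'` for every `Y'` between a finite `A ⊆ X` and `X`;
deductivity together with `Y ⊆ C Y` then puts `x` in `Cn (C Y ∪ A)` for every `Y ⊆ X`.
Iterating the deduction theorem over the finitely many premises of `A` turns this into a single
formula `t = a₁ → (a₂ → ⋯ → x)` lying in `Cn (C Y) = C Y` for all `Y ⊆ X`, i.e. in the intersection,
and `x ∈ Cn (A ∪ {t})`.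
-/

open Set

namespace DedNonmon

variable {L : Type*}

theorem exists_forall_mem_union_iff_of_finite {Cn : Set L → Set L} {imp : L → L → L}
    (himp : ∀ (a b : L) (X : Set L), b ∈ Cn (X ∪ {a}) ↔ imp a b ∈ Cn X)
    {A : Set L} (hA : A.Finite) (x : L) : ∃ t : L, ∀ Z : Set L, x ∈ Cn (Z ∪ A) ↔ t ∈ Cn Z := by
  induction A, hA using Set.Finite.induction_on generalizing x with
  | empty => exact ⟨x, fun Z => by rw [union_empty]⟩
  | @insert a s _ _ ih =>
    obtain ⟨t, ht⟩ := ih (imp a x)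
    refine ⟨t, fun Z => ?_⟩
    rw [← ht, ← himp, union_insert, union_singleton]

section

variable {Cn C : Set L → Set L}

theorem Supra.subset (hIncl : ∀ X : Set L, X ⊆ Cn X) (hSup : Supra Cn C) (X : Set L) :
    X ⊆ C X :=
  (hIncl X).trans (hSup X)

theorem exists_finite_forall_mem_cn_union (hIncl : ∀ X : Set L, X ⊆ Cn X)
    (hMono : ∀ X Y : Set L, X ⊆ Y → Cn X ⊆ Cn Y) (hSup : Supra Cn C) (hDed : Deduc Cn C)
    (hCpt : CompactOp C) {X : Set L} {x : L} (hx : x ∈ C X) :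
    ∃ A : Set L, A.Finite ∧ A ⊆ X ∧ ∀ Y : Set L, Y ⊆ X → x ∈ Cn (C Y ∪ A) := by
  obtain ⟨A, hAfin, hAX, hA⟩ := hCpt X x hx
  refine ⟨A, hAfin, hAX, fun Y hY => ?_⟩
  have hxYA : x ∈ C (Y ∪ A) := hA (Y ∪ A) subset_union_right (union_subset hY hAX)
  have hYA : Y ∪ A ∪ C Y ⊆ C Y ∪ A :=
    union_subset (union_subset_union_left A (hSup.subset hIncl Y)) subset_union_left
  exact hMono _ _ hYA (hDed (Y ∪ A) Y subset_union_left hxYA)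

end

theorem stmt2_general (Cn C : Set L → Set L)
    (hIncl : ∀ X : Set L, X ⊆ Cn X)
    (hMono : ∀ X Y : Set L, X ⊆ Y → Cn X ⊆ Cn Y)
    (hImp : ∃ imp : L → L → L, ∀ (a b : L) (X : Set L), b ∈ Cn (X ∪ {a}) ↔ imp a b ∈ Cn X)
    (hSup : Supra Cn C) (hLA : LeftAb Cn C) (hDed : Deduc Cn C) (hCpt : CompactOp C) :
    ∀ X : Set L, C X = Cn (X ∪ ⋂ (Y : Set L) (_ : Y ⊆ X), C Y) := by
  obtain ⟨imp, himp⟩ := hImp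
  intro X
  apply Subset.antisymm
  · intro x hx
    obtain ⟨A, hAfin, hAX, hxA⟩ :=
      exists_finite_forall_mem_cn_union hIncl hMono hSup hDed hCpt hx
    obtain ⟨t, ht⟩ := exists_forall_mem_union_iff_of_finite himp hAfin x
    have htI : t ∈ ⋂ (Y : Set L) (_ : Y ⊆ X), C Y :=
      mem_iInter₂.2 fun Y hY => hLA Y ▸ (ht (C Y)).1 (hxA Y hY)
    have htA : {t} ∪ A ⊆ X ∪ ⋂ (Y : Set L) (_ : Y ⊆ X), C Y :=
      union_subset (singleton_subset_iff.2 (Or.inr htI)) (hAX.trans subset_union_left)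
    exact hMono _ _ htA ((ht {t}).2 (hIncl {t} rfl))
  · have hXI : X ∪ ⋂ (Y : Set L) (_ : Y ⊆ X), C Y ⊆ C X :=
      union_subset (hSup.subset hIncl X) (biInter_subset_of_mem (subset_refl X))
    exact (hMono _ _ hXI).trans (hLA X).subset

theorem stmt2 (Cn C : Set L → Set L)
    (hIncl : ∀ X : Set L, X ⊆ Cn X)
    (hMono : ∀ X Y : Set L, X ⊆ Y → Cn X ⊆ Cn Y)
    (hIdem : ∀ X : Set L, Cn (Cn X) = Cn X)
    (hCnCpt : ∀ (X : Set L) (x : L), x ∈ Cn X → ∃ A : Set L, A.Finite ∧ A ⊆ X ∧ x ∈ Cn A)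
    (hImp : ∃ imp : L → L → L, ∀ (a b : L) (X : Set L), b ∈ Cn (X ∪ {a}) ↔ imp a b ∈ Cn X)
    (hSup : Supra Cn C) (hLA : LeftAb Cn C) (hDed : Deduc Cn C) (hCpt : CompactOp C) :
    ∀ X : Set L, C X = Cn (X ∪ ⋂ (Y : Set L) (_ : Y ⊆ X), C Y) :=
  stmt2_general Cn C hIncl hMono hImp hSup hLA hDed hCpt

end DedNonmon
end

section
/- If S : Set L → Set L is antitonic and the operation C defined by C(X) = Cn(X ∪ S(X)) satisfies this equation for all X ⊆ L, then for every X ⊆ L, S(X) ⊆ ⋂_{Y ⊆ X} C(Y). In other words, ⋂_{Y ⊆ X} C(Y) is the largest antitonic operator representing C. -/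
open Set

namespace DedNonmon

variable {L : Type*}

theorem stmt3_general (Cn C S : Set L → Set L)
    (hIncl : ∀ X : Set L, X ⊆ Cn X)
    (hS : Antitonic S)
    (hC : ∀ X : Set L, C X = Cn (X ∪ S X)) :
    ∀ X : Set L, S X ⊆ ⋂ (Y : Set L) (_ : Y ⊆ X), C Y := by
  intro X
  refine subset_iInter₂ fun Y hY => ?_
  rw [hC]
  exact (hS Y X hY).trans (subset_union_right.trans (hIncl _))

theorem stmt3 (Cn C S : Set L → Set L)
    (hIncl : ∀ X : Set L, X ⊆ Cn X)
    (hMono : ∀ X Y : Set L, X ⊆ Y → Cn X ⊆ Cn Y)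
    (hIdem : ∀ X : Set L, Cn (Cn X) = Cn X)
    (hCnCpt : ∀ (X : Set L) (x : L), x ∈ Cn X → ∃ A : Set L, A.Finite ∧ A ⊆ X ∧ x ∈ Cn A)
    (hS : Antitonic S)
    (hC : ∀ X : Set L, C X = Cn (X ∪ S X)) :
    ∀ X : Set L, S X ⊆ ⋂ (Y : Set L) (_ : Y ⊆ X), C Y :=
  stmt3_general Cn C S hIncl hS hC

end DedNonmon
end

section
/- If S : Set L → Set L is antitonic and right-absorbing, and C is defined by C(X) = Cn(X ∪ S(X)) for all X ⊆ L, then for every X ⊆ L, S(X) ⊆ ⋂_{Y : Y ⊆ Cn(X)} C(Y). In other words, ⋂_{Y ⊆ Cn(X)} C(Y) is the largest right-absorbing antitonic representation of C. -/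
open Set

namespace DedNonmon

variable {L : Type*}

theorem cn_union_eq_of_subset_cn {Cn : Set L → Set L}
    (hIncl : ∀ X : Set L, X ⊆ Cn X)
    (hMono : ∀ X Y : Set L, X ⊆ Y → Cn X ⊆ Cn Y)
    (hIdem : ∀ X : Set L, Cn (Cn X) = Cn X)
    {X Y : Set L} (hY : Y ⊆ Cn X) : Cn (X ∪ Y) = Cn X := by
  refine Subset.antisymm ?_ (hMono _ _ subset_union_left)
  calc Cn (X ∪ Y) ⊆ Cn (Cn X) := hMono _ _ (union_subset (hIncl X) hY)
    _ = Cn X := hIdem X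

theorem Antitonic.subset_of_subset_cn {Cn S : Set L → Set L}
    (hIncl : ∀ X : Set L, X ⊆ Cn X)
    (hMono : ∀ X Y : Set L, X ⊆ Y → Cn X ⊆ Cn Y)
    (hIdem : ∀ X : Set L, Cn (Cn X) = Cn X)
    (hS : Antitonic S) (hSra : RightAb Cn S)
    {X Y : Set L} (hY : Y ⊆ Cn X) : S X ⊆ S Y := by
  have hSXY : S (X ∪ Y) = S X := hSra _ _ (cn_union_eq_of_subset_cn hIncl hMono hIdem hY)
  exact hSXY ▸ hS Y (X ∪ Y) subset_union_right

theorem stmt5_general (Cn C S : Set L → Set L)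
    (hIncl : ∀ X : Set L, X ⊆ Cn X)
    (hMono : ∀ X Y : Set L, X ⊆ Y → Cn X ⊆ Cn Y)
    (hIdem : ∀ X : Set L, Cn (Cn X) = Cn X)
    (hS : Antitonic S) (hSra : RightAb Cn S)
    (hC : ∀ X : Set L, C X = Cn (X ∪ S X)) :
    ∀ X : Set L, S X ⊆ ⋂ (Y : Set L) (_ : Y ⊆ Cn X), C Y := by
  intro X x hx
  simp only [mem_iInter]
  intro Y hY
  rw [hC]
  exact hIncl _ (Or.inr (hS.subset_of_subset_cn hIncl hMono hIdem hSra hY hx))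

theorem stmt5 (Cn C S : Set L → Set L)
    (hIncl : ∀ X : Set L, X ⊆ Cn X)
    (hMono : ∀ X Y : Set L, X ⊆ Y → Cn X ⊆ Cn Y)
    (hIdem : ∀ X : Set L, Cn (Cn X) = Cn X)
    (hCnCpt : ∀ (X : Set L) (x : L), x ∈ Cn X → ∃ A : Set L, A.Finite ∧ A ⊆ X ∧ x ∈ Cn A)
    (hS : Antitonic S) (hSra : RightAb Cn S)
    (hC : ∀ X : Set L, C X = Cn (X ∪ S X)) :
    ∀ X : Set L, S X ⊆ ⋂ (Y : Set L) (_ : Y ⊆ Cn X), C Y :=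
  stmt5_general Cn C S hIncl hMono hIdem hS hSra hC

end DedNonmon
end

section
/- Every supraclassical, left-absorbing and cumulative operation C : Set L → Set L is right-absorbing, i.e., Cn(X) = Cn(Y) implies C(X) = C(Y); equivalently, C(Cn(X)) = C(X) for all X. -/
open Set

namespace DedNonmon

variable {L : Type*}

theorem rightAb_of_apply_cn_eq {Cn C : Set L → Set L} (h : ∀ X : Set L, C (Cn X) = C X) :
    RightAb Cn C := fun X Y hXY => by
  rw [← h X, ← h Y, hXY]

/-- Cumulativity applied to `Y = Cn X`, which is admissible because `Cn X ⊆ C X = Cn (C X)`. -/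
theorem apply_cn_eq_of_cumul {Cn C : Set L → Set L} (hIncl : ∀ X : Set L, X ⊆ Cn X)
    (hSup : Supra Cn C) (hLA : LeftAb Cn C) (hCum : Cumul Cn C) (X : Set L) :
    C (Cn X) = C X := by
  have hCnX : Cn X ⊆ Cn (C X) := (hLA X).symm ▸ hSup X
  have hCum' := hCum X (Cn X) hCnX
  rw [union_eq_self_of_subset_left (hIncl X)] at hCum'
  rw [← hLA (Cn X), hCum', hLA X]

theorem stmt6_general (Cn C : Set L → Set L)
    (hIncl : ∀ X : Set L, X ⊆ Cn X)
    (hSup : Supra Cn C) (hLA : LeftAb Cn C) (hCum : Cumul Cn C) :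
    RightAb Cn C ∧ ∀ X : Set L, C (Cn X) = C X :=
  have key := apply_cn_eq_of_cumul hIncl hSup hLA hCum
  ⟨rightAb_of_apply_cn_eq key, key⟩

theorem stmt6 (Cn C : Set L → Set L)
    (hIncl : ∀ X : Set L, X ⊆ Cn X)
    (hMono : ∀ X Y : Set L, X ⊆ Y → Cn X ⊆ Cn Y)
    (hIdem : ∀ X : Set L, Cn (Cn X) = Cn X)
    (hCnCpt : ∀ (X : Set L) (x : L), x ∈ Cn X → ∃ A : Set L, A.Finite ∧ A ⊆ X ∧ x ∈ Cn A)
    (hSup : Supra Cn C) (hLA : LeftAb Cn C) (hCum : Cumul Cn C) :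
    RightAb Cn C ∧ ∀ X : Set L, C (Cn X) = C X :=
  stmt6_general Cn C hIncl hSup hLA hCum

end DedNonmon
end

section
/- If C : Set L → Set L is supraclassical, left-absorbing, deductive and cumulative, then for every X ⊆ L, ⋂_{Y : Y ⊆ Cn(X)} C(Y) = ⋂_{Y : Y ⊆ C(X)} C(Y). -/
open Set

namespace DedNonmon

variable {L : Type*}

/-- The witness is `b₁ → (b₂ → ⋯ → (bₙ → y))` for `B = {b₁, …, bₙ}`. -/
lemma exists_imp_iterate (Cn : Set L → Set L) (imp : L → L → L)
    (himp : ∀ (a b : L) (X : Set L), b ∈ Cn (X ∪ {a}) ↔ imp a b ∈ Cn X)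
    {B : Set L} (hB : B.Finite) (y : L) :
    ∃ u : L, ∀ S : Set L, u ∈ Cn S ↔ y ∈ Cn (S ∪ B) := by
  induction B, hB using Set.Finite.induction_on with
  | empty => exact ⟨y, fun S => by rw [union_empty]⟩
  | @insert a B _ _ ih =>
    obtain ⟨u, hu⟩ := ih
    refine ⟨imp a u, fun S => ?_⟩
    rw [← himp, hu, union_assoc, singleton_union]

/-- The finitely many premises used from `T` are folded into a single formula by the deduction
theorem; that formula is a consequence of both `S` and `S'`. -/
lemma inter_cn_union_subset (Cn : Set L → Set L)
    (hIncl : ∀ X : Set L, X ⊆ Cn X)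
    (hMono : ∀ X Y : Set L, X ⊆ Y → Cn X ⊆ Cn Y)
    (hCnCpt : ∀ (X : Set L) (x : L), x ∈ Cn X →
      ∃ A : Set L, A.Finite ∧ A ⊆ X ∧ x ∈ Cn A)
    (imp : L → L → L)
    (himp : ∀ (a b : L) (X : Set L), b ∈ Cn (X ∪ {a}) ↔ imp a b ∈ Cn X)
    (S S' T : Set L) :
    Cn (S ∪ T) ∩ Cn (S' ∪ T) ⊆ Cn ((Cn S ∩ Cn S') ∪ T) := by
  rintro y ⟨hyS, hyS'⟩
  obtain ⟨A, hAfin, hAST, hyA⟩ := hCnCpt _ y hyS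
  obtain ⟨A', hA'fin, hA'S'T, hyA'⟩ := hCnCpt _ y hyS'
  set B := (A ∪ A') ∩ T
  have hB : B.Finite := (hAfin.union hA'fin).subset inter_subset_left
  have hBT : B ⊆ T := inter_subset_right
  have hAB : A ⊆ S ∪ B := fun a ha => (hAST ha).imp id fun haT => ⟨Or.inl ha, haT⟩
  have hA'B : A' ⊆ S' ∪ B := fun a ha => (hA'S'T ha).imp id fun haT => ⟨Or.inr ha, haT⟩
  obtain ⟨u, hu⟩ := exists_imp_iterate Cn imp himp hB y
  have huS : u ∈ Cn S := (hu S).2 (hMono _ _ hAB hyA)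
  have huS' : u ∈ Cn S' := (hu S').2 (hMono _ _ hA'B hyA')
  have hy : y ∈ Cn ((Cn S ∩ Cn S') ∪ B) := (hu _).1 (hIncl _ ⟨huS, huS'⟩)
  exact hMono _ _ (union_subset_union_right _ hBT) hy

lemma Supra.subset_self {Cn C : Set L → Set L} (hSup : Supra Cn C)
    (hIncl : ∀ X : Set L, X ⊆ Cn X) (X : Set L) : X ⊆ C X :=
  (hIncl X).trans (hSup X)

lemma Cumul.union_eq {Cn C : Set L → Set L} (hCum : Cumul Cn C) (hLA : LeftAb Cn C)
    {X Y : Set L} (hY : Y ⊆ C X) : C (X ∪ Y) = C X := by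
  have h := hCum X Y (by rwa [hLA])
  rwa [hLA, hLA] at h

lemma Cumul.eq_of_subset_of_subset {Cn C : Set L → Set L} (hCum : Cumul Cn C)
    (hLA : LeftAb Cn C) {X Y : Set L} (hY : Y ⊆ C X) (hX : X ⊆ C Y) : C X = C Y := by
  rw [← hCum.union_eq hLA hY, union_comm, hCum.union_eq hLA hX]

lemma Cumul.apply_cn_eq {Cn C : Set L → Set L} (hCum : Cumul Cn C) (hLA : LeftAb Cn C)
    (hSup : Supra Cn C) (hIncl : ∀ X : Set L, X ⊆ Cn X) (X : Set L) : C (Cn X) = C X := by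
  rw [← hCum.union_eq hLA (hSup X), union_eq_self_of_subset_left (hIncl X)]

theorem stmt7 (Cn C : Set L → Set L)
    (hIncl : ∀ X : Set L, X ⊆ Cn X)
    (hMono : ∀ X Y : Set L, X ⊆ Y → Cn X ⊆ Cn Y)
    (hIdem : ∀ X : Set L, Cn (Cn X) = Cn X)
    (hCnCpt : ∀ (X : Set L) (x : L), x ∈ Cn X → ∃ A : Set L, A.Finite ∧ A ⊆ X ∧ x ∈ Cn A)
    (hImp : ∃ imp : L → L → L, ∀ (a b : L) (X : Set L), b ∈ Cn (X ∪ {a}) ↔ imp a b ∈ Cn X)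
    (hSup : Supra Cn C) (hLA : LeftAb Cn C) (hDed : Deduc Cn C) (hCum : Cumul Cn C) :
    ∀ X : Set L,
      (⋂ (Y : Set L) (_ : Y ⊆ Cn X), C Y) = ⋂ (Y : Set L) (_ : Y ⊆ C X), C Y := by
  intro X
  obtain ⟨imp, himp⟩ := hImp
  refine Subset.antisymm (fun x hx => mem_iInter₂.2 fun Y hYX => ?_)
    fun x hx => mem_iInter₂.2 fun Y hY => mem_iInter₂.1 hx Y (hY.trans (hSup X))
  -- `Y` and `Cn X ∩ Cn Y` are mutually contained in each other's `C`, hence have the same `C`.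
  set Z := Cn X ∩ Cn Y
  have hZX : Z ⊆ Cn X := inter_subset_left
  have hYZ : Y ⊆ C Z := fun y hy => by
    have hyX : y ∈ Cn (Cn X ∪ C Z) :=
      hDed _ _ hZX <| (hCum.apply_cn_eq hLA hSup hIncl X).symm ▸ hYX hy
    have hyY : y ∈ Cn (Y ∪ C Z) := hIncl _ (Or.inl hy)
    have hy := inter_cn_union_subset Cn hIncl hMono hCnCpt imp himp _ _ _ ⟨hyX, hyY⟩
    rw [hIdem, union_eq_self_of_subset_left (hSup.subset_self hIncl Z), hLA] at hy
    exact hy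
  have hZY : Z ⊆ C Y := inter_subset_right.trans (hSup Y)
  rw [← hCum.eq_of_subset_of_subset hLA hYZ hZY]
  exact mem_iInter₂.1 hx Z hZX

end DedNonmon
end

section
/- Let C : Set L → Set L be an operation. The following are equivalent: (1) there exists an antitonic, right-absorbing and cumulative operator S : Set L → Set L such that C(X) = Cn(X ∪ S(X)) for every X ⊆ L; (2) for every X ⊆ L, C(X) = Cn(X ∪ ⋂_{Y : Y ⊆ C(X)} C(Y)); (3) C is supraclassical, left-absorbing, deductive, cumulative and compact. -/
/-!
For (1) ⇒ (2), cumulativity and right absorption of `S` give `Cn (S X) = Cn (S (C X))`, and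
antitonicity then puts `S X` inside `core C X = ⋂_{Y ⊆ C X} C Y`. (2) ⇒ (3) is a direct check,
compactness of `C` coming from that of `Cn`.

The converse rests on the smaller-looking `classicalCore Cn C X = ⋂_{W ⊆ Cn X} C W`, which is
trivially antitonic and right-absorbing. Under (3), every `x ∈ C X` follows from `X` together with
a single formula of `classicalCore Cn C X`, and the implication connective then shows that this set
equals `core C X`. This gives (2), and `S = classicalCore Cn C` witnesses (1).
-/

open Set

namespace DedNonmon

variable {L : Type*}

def core (C : Set L → Set L) (X : Set L) : Set L := ⋂ (Y : Set L) (_ : Y ⊆ C X), C Y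

def classicalCore (c : ClosureOperator (Set L)) (C : Set L → Set L) (X : Set L) : Set L :=
  ⋂ (W : Set L) (_ : W ⊆ c X), C W

def IsCoreGenerated (c : ClosureOperator (Set L)) (C : Set L → Set L) : Prop :=
  ∀ X : Set L, C X = c (X ∪ core C X)

structure IsCumulativeDeductive (c : ClosureOperator (Set L)) (C : Set L → Set L) : Prop where
  supra : Supra c C
  leftAb : LeftAb c C
  deduc : Deduc c C
  cumul : Cumul c C
  compact : CompactOp C

theorem isCumulativeDeductive_iff {c : ClosureOperator (Set L)} {C : Set L → Set L} :
    IsCumulativeDeductive c C ↔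
      Supra c C ∧ LeftAb c C ∧ Deduc c C ∧ Cumul c C ∧ CompactOp C :=
  ⟨fun h => ⟨h.supra, h.leftAb, h.deduc, h.cumul, h.compact⟩,
    fun ⟨hsup, hlab, hded, hcum, hcpt⟩ => ⟨hsup, hlab, hded, hcum, hcpt⟩⟩

section

variable {c : ClosureOperator (Set L)} {C S : Set L → Set L} {X Y : Set L}

theorem mem_core {s : L} : s ∈ core C X ↔ ∀ Y : Set L, Y ⊆ C X → s ∈ C Y := by
  simp [core]

theorem core_subset (h : Y ⊆ C X) : core C X ⊆ C Y := fun _ hs => mem_core.1 hs Y h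

theorem core_congr (h : C X = C Y) : core C X = core C Y := by
  unfold core; rw [h]

theorem mem_classicalCore {s : L} :
    s ∈ classicalCore c C X ↔ ∀ W : Set L, W ⊆ c X → s ∈ C W := by
  simp [classicalCore]

theorem antitonic_classicalCore : Antitonic (classicalCore c C) := fun _ _ hXY _ hs =>
  mem_classicalCore.2 fun W hW => mem_classicalCore.1 hs W (hW.trans (c.monotone hXY))

theorem rightAb_classicalCore : RightAb c (classicalCore c C) := fun X Y h => by
  unfold classicalCore; rw [h]

theorem Supra.subset_apply (h : Supra c C) (X : Set L) : X ⊆ C X :=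
  (c.le_closure X).trans (h X)

theorem LeftAb.closure_subset_iff (h : LeftAb c C) {A : Set L} : c A ⊆ C X ↔ A ⊆ C X :=
  (c.isClosed_iff.2 (h X)).closure_le_iff

theorem closure_union_core_subset (hsup : Supra c C) (hlab : LeftAb c C) (X : Set L) :
    c (X ∪ core C X) ⊆ C X :=
  hlab.closure_subset_iff.2 (union_subset (hsup.subset_apply X) (core_subset (hsup.subset_apply X)))

theorem supra_of_eq_closure_union (h : ∀ X, C X = c (X ∪ S X)) : Supra c C := fun X => by
  rw [h X]; exact c.monotone subset_union_left

theorem leftAb_of_eq_closure_union (h : ∀ X, C X = c (X ∪ S X)) : LeftAb c C := fun X => by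
  rw [h X]; exact c.idempotent _

theorem subset_core_of_eq_closure_union (hanti : Antitonic S) (hrab : RightAb c S)
    (hcum : Cumul c S) (h : ∀ X, C X = c (X ∪ S X)) (X : Set L) : S X ⊆ core C X := by
  have hSC : c (S X) = c (S (C X)) := by
    rw [h X, ← hrab _ _ (c.idempotent _).symm]
    exact (hcum X (S X) (c.le_closure _)).symm
  intro s hs
  refine mem_core.2 fun Y hY => ?_
  rw [h Y]
  have hsS : s ∈ c (S (C X)) := hSC ▸ c.le_closure _ hs
  exact c.monotone subset_union_right (c.monotone (hanti _ _ hY) hsS)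

theorem isCoreGenerated_of_eq_closure_union (hanti : Antitonic S) (hrab : RightAb c S)
    (hcum : Cumul c S) (h : ∀ X, C X = c (X ∪ S X)) : IsCoreGenerated c C := fun X =>
  subset_antisymm
    (h X ▸ c.monotone (union_subset_union_right X
      (subset_core_of_eq_closure_union hanti hrab hcum h X)))
    (closure_union_core_subset (supra_of_eq_closure_union h) (leftAb_of_eq_closure_union h) X)

theorem exists_mem_closure_iff_mem_closure_union {imp : L → L → L}
    (himp : ∀ (a b : L) (X : Set L), b ∈ c (X ∪ {a}) ↔ imp a b ∈ c X)
    {A : Set L} (hA : A.Finite) (b : L) :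
    ∃ φ : L, ∀ X : Set L, φ ∈ c X ↔ b ∈ c (X ∪ A) := by
  induction A, hA using Set.Finite.induction_on with
  | empty => exact ⟨b, fun X => by rw [union_empty]⟩
  | @insert a A _ _ ih =>
    obtain ⟨φ, hφ⟩ := ih
    refine ⟨imp a φ, fun X => ?_⟩
    rw [← himp, hφ, union_assoc, singleton_union]

namespace IsCoreGenerated

theorem supra (h : IsCoreGenerated c C) : Supra c C := supra_of_eq_closure_union h

theorem leftAb (h : IsCoreGenerated c C) : LeftAb c C := leftAb_of_eq_closure_union h

theorem deduc (h : IsCoreGenerated c C) : Deduc c C := fun X Y hYX => by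
  rw [h X]
  exact c.monotone (union_subset_union_right X (core_subset (hYX.trans (h.supra.subset_apply X))))

theorem cumul (h : IsCoreGenerated c C) : Cumul c C := fun X Y hY => by
  rw [h.leftAb X] at hY
  have hX : X ⊆ C (X ∪ Y) := subset_union_left.trans (h.supra.subset_apply _)
  have hXY : X ∪ Y ⊆ C X := union_subset (h.supra.subset_apply X) hY
  congr 1
  apply subset_antisymm
  · rw [h (X ∪ Y)]
    exact h.leftAb.closure_subset_iff.2 (union_subset hXY (core_subset hX))
  · rw [h X]
    exact h.leftAb.closure_subset_iff.2 (union_subset hX (core_subset hXY))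

theorem compactOp (h : IsCoreGenerated c C)
    (hcpt : ∀ (X : Set L) (x : L), x ∈ c X → ∃ A : Set L, A.Finite ∧ A ⊆ X ∧ x ∈ c A) :
    CompactOp C := by
  intro X x hx
  obtain ⟨D, hDfin, hDX, hxD⟩ := hcpt _ x (h X ▸ hx)
  refine ⟨D ∩ X, hDfin.subset inter_subset_left, inter_subset_right, fun Y hDY hYX => ?_⟩
  have hD : D ⊆ C Y := fun d hd => (hDX hd).elim
    (fun hdX => h.supra.subset_apply Y (hDY ⟨hd, hdX⟩))
    (fun hdK => core_subset (hYX.trans (h.supra.subset_apply X)) hdK)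
  exact h.leftAb.closure_subset_iff.2 hD hxD

theorem isCumulativeDeductive (h : IsCoreGenerated c C)
    (hcpt : ∀ (X : Set L) (x : L), x ∈ c X → ∃ A : Set L, A.Finite ∧ A ⊆ X ∧ x ∈ c A) :
    IsCumulativeDeductive c C :=
  ⟨h.supra, h.leftAb, h.deduc, h.cumul, h.compactOp hcpt⟩

end IsCoreGenerated

namespace IsCumulativeDeductive

theorem union_eq (h : IsCumulativeDeductive c C) (hY : Y ⊆ C X) : C (X ∪ Y) = C X := by
  have hcum := h.cumul X Y (by rwa [h.leftAb X])
  rwa [h.leftAb, h.leftAb] at hcum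

theorem rightAb (h : IsCumulativeDeductive c C) : RightAb c C := by
  have key : ∀ U V : Set L, c U = c V → C (U ∪ V) = C U := fun U V hUV =>
    h.union_eq ((c.le_closure V).trans (hUV ▸ h.supra U))
  intro X Y hXY
  rw [← key X Y hXY, union_comm, key Y X hXY.symm]

variable {imp : L → L → L}

/-- By compactness, `x ∈ C X` needs only a finite `A ⊆ Cn X` besides any `W ⊆ Cn X`;
deductivity then puts `⋀ A → x` into every such `C W`. -/
theorem exists_mem_classicalCore (h : IsCumulativeDeductive c C)
    (himp : ∀ (a b : L) (X : Set L), b ∈ c (X ∪ {a}) ↔ imp a b ∈ c X) {x : L} (hx : x ∈ C X) :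
    ∃ φ ∈ classicalCore c C X, x ∈ c (X ∪ {φ}) := by
  obtain ⟨A, hAfin, hAX, hA⟩ := h.compact _ x (h.rightAb _ _ (c.idempotent X).symm ▸ hx)
  obtain ⟨φ, hφ⟩ := exists_mem_closure_iff_mem_closure_union himp hAfin x
  refine ⟨φ, mem_classicalCore.2 fun W hW => ?_, ?_⟩
  · have hxWA : x ∈ c (W ∪ A ∪ C W) :=
      h.deduc _ W subset_union_left (hA _ subset_union_right (union_subset hW hAX))
    have hWA : W ∪ A ∪ C W ⊆ C W ∪ A :=
      union_subset (union_subset_union_left A (h.supra.subset_apply W)) subset_union_left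
    rw [← h.leftAb W]
    exact (hφ _).2 (c.monotone hWA hxWA)
  · have hxφ : x ∈ c ({φ} ∪ A) := (hφ {φ}).1 (c.le_closure _ rfl)
    refine c.le_closure_iff.1 (union_subset ?_ ?_) hxφ
    · exact subset_union_right.trans (c.le_closure _)
    · exact hAX.trans (c.monotone subset_union_left)

/-- For `Y ⊆ C X`, pick `φ_w` as in `exists_mem_classicalCore` for each `w ∈ Y`; the implications
`φ_w → w` form a set `W ⊆ Cn X` with `Cn (W ∪ Y) = Cn Y` and `Y ⊆ C W`, so
`C W = C (W ∪ Y) = C Y`. -/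
theorem classicalCore_subset_core (h : IsCumulativeDeductive c C)
    (himp : ∀ (a b : L) (X : Set L), b ∈ c (X ∪ {a}) ↔ imp a b ∈ c X) :
    classicalCore c C X ⊆ core C X := by
  intro s hs
  refine mem_core.2 fun Y hY => ?_
  set W : Set L := {ψ | ∃ w ∈ Y, ∃ φ ∈ classicalCore c C X, w ∈ c (X ∪ {φ}) ∧ ψ = imp φ w}
  have hWX : W ⊆ c X := by
    rintro _ ⟨w, -, φ, -, hw, rfl⟩
    exact (himp φ w X).1 hw
  have hWY : W ⊆ c Y := by
    rintro _ ⟨w, hwY, φ, -, -, rfl⟩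
    exact c.monotone (singleton_subset_iff.2 hwY) ((himp φ w {w}).1 (c.le_closure _ (Or.inl rfl)))
  have hYW : Y ⊆ C W := by
    intro w hw
    obtain ⟨φ, hφ, hwφ⟩ := h.exists_mem_classicalCore himp (hY hw)
    have hψ : imp φ w ∈ C W := h.supra.subset_apply W ⟨w, hw, φ, hφ, hwφ, rfl⟩
    have hwψφ : w ∈ c ({imp φ w} ∪ {φ}) := (himp φ w _).2 (c.le_closure _ rfl)
    rw [← h.leftAb W]
    refine c.le_closure_iff.1 (union_subset ?_ ?_) hwψφ
    · exact singleton_subset_iff.2 (c.le_closure _ hψ)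
    · exact singleton_subset_iff.2 (c.le_closure _ (mem_classicalCore.1 hφ W hWX))
  have hWYY : c (W ∪ Y) = c Y :=
    subset_antisymm (c.le_closure_iff.1 (union_subset hWY (c.le_closure Y)))
      (c.monotone subset_union_right)
  rw [← h.rightAb _ _ hWYY, h.union_eq hYW]
  exact mem_classicalCore.1 hs W hWX

theorem classicalCore_eq_core (h : IsCumulativeDeductive c C)
    (himp : ∀ (a b : L) (X : Set L), b ∈ c (X ∪ {a}) ↔ imp a b ∈ c X) :
    classicalCore c C X = core C X :=
  (h.classicalCore_subset_core himp).antisymm fun _ hs =>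
    mem_classicalCore.2 fun _ hW => core_subset (hW.trans (h.supra X)) hs

theorem isCoreGenerated (h : IsCumulativeDeductive c C)
    (himp : ∀ (a b : L) (X : Set L), b ∈ c (X ∪ {a}) ↔ imp a b ∈ c X) :
    IsCoreGenerated c C := fun X => by
  refine subset_antisymm (fun x hx => ?_) (closure_union_core_subset h.supra h.leftAb X)
  obtain ⟨φ, hφ, hxφ⟩ := h.exists_mem_classicalCore himp hx
  have hφK : {φ} ⊆ core C X := singleton_subset_iff.2 (h.classicalCore_subset_core himp hφ)
  exact c.monotone (union_subset_union_right X hφK) hxφ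

theorem cumul_classicalCore (h : IsCumulativeDeductive c C)
    (himp : ∀ (a b : L) (X : Set L), b ∈ c (X ∪ {a}) ↔ imp a b ∈ c X) :
    Cumul c (classicalCore c C) := fun X Y hY => by
  simp only [h.classicalCore_eq_core himp] at hY ⊢
  have hYX : Y ⊆ C X :=
    hY.trans (h.leftAb.closure_subset_iff.2 (core_subset (h.supra.subset_apply X)))
  rw [core_congr (h.union_eq hYX)]

theorem exists_eq_closure_union (h : IsCumulativeDeductive c C)
    (himp : ∀ (a b : L) (X : Set L), b ∈ c (X ∪ {a}) ↔ imp a b ∈ c X) :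
    ∃ S : Set L → Set L, Antitonic S ∧ RightAb c S ∧ Cumul c S ∧
      ∀ X : Set L, C X = c (X ∪ S X) :=
  ⟨classicalCore c C, antitonic_classicalCore, rightAb_classicalCore,
    h.cumul_classicalCore himp, fun X => by
      rw [h.classicalCore_eq_core himp]; exact h.isCoreGenerated himp X⟩

end IsCumulativeDeductive

end

theorem stmt8 (Cn C : Set L → Set L)
    (hIncl : ∀ X : Set L, X ⊆ Cn X)
    (hMono : ∀ X Y : Set L, X ⊆ Y → Cn X ⊆ Cn Y)
    (hIdem : ∀ X : Set L, Cn (Cn X) = Cn X)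
    (hCnCpt : ∀ (X : Set L) (x : L), x ∈ Cn X → ∃ A : Set L, A.Finite ∧ A ⊆ X ∧ x ∈ Cn A)
    (hImp : ∃ imp : L → L → L, ∀ (a b : L) (X : Set L), b ∈ Cn (X ∪ {a}) ↔ imp a b ∈ Cn X)
 :
    ((∃ S : Set L → Set L, Antitonic S ∧ RightAb Cn S ∧ Cumul Cn S ∧
        ∀ X : Set L, C X = Cn (X ∪ S X)) ↔
      ∀ X : Set L, C X = Cn (X ∪ ⋂ (Y : Set L) (_ : Y ⊆ C X), C Y)) ∧
    ((∀ X : Set L, C X = Cn (X ∪ ⋂ (Y : Set L) (_ : Y ⊆ C X), C Y)) ↔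
      (Supra Cn C ∧ LeftAb Cn C ∧ Deduc Cn C ∧ Cumul Cn C ∧ CompactOp C)) := by
  obtain ⟨imp, himp⟩ := hImp
  let c : ClosureOperator (Set L) := .mk' Cn (fun X Y => hMono X Y) hIncl fun X => (hIdem X).le
  have h23 : IsCoreGenerated c C ↔ IsCumulativeDeductive c C :=
    ⟨fun h => h.isCumulativeDeductive hCnCpt, fun h => h.isCoreGenerated himp⟩
  refine ⟨⟨fun ⟨_, hanti, hrab, hcum, hS⟩ =>
    isCoreGenerated_of_eq_closure_union (c := c) hanti hrab hcum hS,
    fun h => (h23.1 h).exists_eq_closure_union himp⟩, h23.trans isCumulativeDeductive_iff⟩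

end DedNonmon
end

section
/- If S : Set L → Set L is antitonic, right-absorbing and cumulative, and C is defined by C(X) = Cn(X ∪ S(X)) for all X ⊆ L, then C is cumulative: whenever Y ⊆ Cn(C(X)) one has Cn(C(X ∪ Y)) = Cn(C(X)). -/
/-!
Write `C X = Cn (X ∪ S X)` and suppose `Y ⊆ Cn (X ∪ S X)`. By compactness and the deduction
theorem each `y ∈ Y` is equivalent, over `X`, to a formula `a₁ → (⋯ → (aₙ → y))` that lies in
`Cn (S X)` and follows from `y`. Hence the set `T = Cn (X ∪ Y) ∩ Cn (S X)` satisfies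
`Cn (X ∪ Y) = Cn (X ∪ T)`, so right absorption and cumulativity of `S` give
`Cn (S (X ∪ Y)) = Cn (S (X ∪ T)) = Cn (S X)`, from which `Cn (C (X ∪ Y)) = Cn (C X)` follows.
-/

open Set

namespace DedNonmon

variable {L : Type*}

variable (c : ClosureOperator (Set L))

/-- The witness is `a₁ → (a₂ → ⋯ → (aₙ → y))` for an enumeration of `A`. -/
theorem exists_discharge_of_mem_closure_union {imp : L → L → L}
    (himp : ∀ (a b : L) (X : Set L), b ∈ c (X ∪ {a}) ↔ imp a b ∈ c X)
    {A : Set L} (hA : A.Finite) {B : Set L} {y : L} (hy : y ∈ c (B ∪ A)) :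
    ∃ z ∈ c B, z ∈ c {y} ∧ y ∈ c (A ∪ {z}) := by
  induction A, hA using Set.Finite.induction_on generalizing B with
  | empty => exact ⟨y, by simpa using hy, c.le_closure _ rfl, c.le_closure _ (Or.inr rfl)⟩
  | @insert a A _ _ ih =>
    rw [show B ∪ insert a A = (B ∪ {a}) ∪ A by ext; simp; tauto] at hy
    obtain ⟨z, hzB, hzy, hyz⟩ := ih hy
    refine ⟨imp a z, (himp a z B).mp hzB,
      (himp a z _).mp (c.monotone subset_union_left hzy), ?_⟩
    set W := insert a A ∪ {imp a z}
    have hzW : z ∈ c W := by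
      have haW : a ∈ W := Or.inl (mem_insert a A)
      have h := (himp a z W).mpr (c.le_closure _ (Or.inr rfl))
      rwa [union_eq_self_of_subset_right (singleton_subset_iff.mpr haW)] at h
    refine c.le_closure_iff.mp ?_ hyz
    rintro x (hx | rfl)
    · exact c.le_closure _ (Or.inl (mem_insert_of_mem a hx))
    · exact hzW

theorem mem_closure_union_inter_of_mem_closure_union {imp : L → L → L}
    (himp : ∀ (a b : L) (X : Set L), b ∈ c (X ∪ {a}) ↔ imp a b ∈ c X)
    (hcpt : ∀ (X : Set L) (x : L), x ∈ c X → ∃ A : Set L, A.Finite ∧ A ⊆ X ∧ x ∈ c A)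
    {X Z : Set L} {y : L} (hy : y ∈ c (X ∪ Z)) :
    y ∈ c (X ∪ (c {y} ∩ c Z)) := by
  obtain ⟨D, hDfin, hDXZ, hyD⟩ := hcpt _ _ hy
  rw [← sdiff_union_inter D X] at hyD
  obtain ⟨z, hzD, hzy, hyz⟩ := exists_discharge_of_mem_closure_union c himp
    (hDfin.subset inter_subset_left) hyD
  have hzZ : z ∈ c Z := c.monotone (fun x hx => (hDXZ hx.1).resolve_left hx.2) hzD
  refine c.monotone ?_ hyz
  rintro x (hx | rfl)
  · exact Or.inl hx.2
  · exact Or.inr ⟨hzy, hzZ⟩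

theorem closure_union_eq_closure_union_inter {imp : L → L → L}
    (himp : ∀ (a b : L) (X : Set L), b ∈ c (X ∪ {a}) ↔ imp a b ∈ c X)
    (hcpt : ∀ (X : Set L) (x : L), x ∈ c X → ∃ A : Set L, A.Finite ∧ A ⊆ X ∧ x ∈ c A)
    {X Y Z : Set L} (hY : Y ⊆ c (X ∪ Z)) :
    c (X ∪ Y) = c (X ∪ (c (X ∪ Y) ∩ c Z)) := by
  apply subset_antisymm
  · refine c.le_closure_iff.mp (union_subset (subset_union_left.trans (c.le_closure _)) ?_)
    intro y hy
    refine c.monotone (union_subset_union_right X (inter_subset_inter_left _ ?_))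
      (mem_closure_union_inter_of_mem_closure_union c himp hcpt (hY hy))
    exact c.le_closure_iff.mp (singleton_subset_iff.mpr (c.le_closure _ (Or.inr hy)))
  · exact c.le_closure_iff.mp
      (union_subset (subset_union_left.trans (c.le_closure _)) inter_subset_left)

theorem closure_union_union_eq {X Y V W : Set L} (hY : Y ⊆ c (X ∪ V)) (hWV : c W = c V) :
    c (X ∪ Y ∪ W) = c (X ∪ V) := by
  apply subset_antisymm
  · refine c.le_closure_iff.mp (union_subset (union_subset ?_ hY) ?_)
    · exact subset_union_left.trans (c.le_closure _)
    · exact (c.le_closure W).trans (hWV ▸ c.monotone subset_union_right)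
  · refine c.le_closure_iff.mp (union_subset ?_ ?_)
    · exact (subset_union_left.trans subset_union_left).trans (c.le_closure _)
    · exact (c.le_closure V).trans (hWV ▸ c.monotone subset_union_right)

theorem stmt9_general (Cn C S : Set L → Set L)
    (hIncl : ∀ X : Set L, X ⊆ Cn X)
    (hMono : ∀ X Y : Set L, X ⊆ Y → Cn X ⊆ Cn Y)
    (hIdem : ∀ X : Set L, Cn (Cn X) = Cn X)
    (hCnCpt : ∀ (X : Set L) (x : L), x ∈ Cn X → ∃ A : Set L, A.Finite ∧ A ⊆ X ∧ x ∈ Cn A)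
    (hImp : ∃ imp : L → L → L, ∀ (a b : L) (X : Set L), b ∈ Cn (X ∪ {a}) ↔ imp a b ∈ Cn X)
    (hSra : RightAb Cn S) (hScum : Cumul Cn S)
    (hC : ∀ X : Set L, C X = Cn (X ∪ S X)) :
    Cumul Cn C := by
  obtain ⟨imp, himp⟩ := hImp
  let c : ClosureOperator (Set L) :=
    ClosureOperator.mk' Cn (fun _ _ => hMono _ _) hIncl (fun X => (hIdem X).le)
  intro X Y hY
  rw [hC, hIdem] at hY
  have hSXY : Cn (S (X ∪ Y)) = Cn (S X) := by
    rw [hSra _ _ (closure_union_eq_closure_union_inter c himp hCnCpt hY)]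
    exact hScum X _ inter_subset_right
  rw [hC, hC, hIdem, hIdem]
  exact closure_union_union_eq c hY hSXY

theorem stmt9 (Cn C S : Set L → Set L)
    (hIncl : ∀ X : Set L, X ⊆ Cn X)
    (hMono : ∀ X Y : Set L, X ⊆ Y → Cn X ⊆ Cn Y)
    (hIdem : ∀ X : Set L, Cn (Cn X) = Cn X)
    (hCnCpt : ∀ (X : Set L) (x : L), x ∈ Cn X → ∃ A : Set L, A.Finite ∧ A ⊆ X ∧ x ∈ Cn A)
    (hImp : ∃ imp : L → L → L, ∀ (a b : L) (X : Set L), b ∈ Cn (X ∪ {a}) ↔ imp a b ∈ Cn X)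
    (hS : Antitonic S) (hSra : RightAb Cn S) (hScum : Cumul Cn S)
    (hC : ∀ X : Set L, C X = Cn (X ∪ S X)) :
    Cumul Cn C :=
  stmt9_general Cn C S hIncl hMono hIdem hCnCpt hImp hSra hScum hC

end DedNonmon
end

section
/- Let C : Set L → Set L be supraclassical, left-absorbing, deductive and cumulative. Then C is supracompact if and only if C is compact. -/
/-! Compactness applied at `Cn X`, where `C (Cn X) = C X` by cumulativity, gives a finite
`B ⊆ Cn X`, which compactness of `Cn` pulls back to a finite `A ⊆ X`. For `A ⊆ Y ⊆ C X` the set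
`T = Cn X ∩ Cn Y` lies between `B` and `Cn X`, so `x ∈ C T`. Moreover `T ⊆ C Y` and `Y ⊆ C T`, so
cumulativity gives `C Y = C T`. The inclusion `Y ⊆ C T` comes from deductivity,
`C X ⊆ Cn (Cn X ∪ C T)`, and an interpolation through the deduction theorem. -/

open Set

namespace DedNonmon

variable {L : Type*}

section Consequence

variable {Cn : Set L → Set L}

theorem exists_forall_mem_iff_mem_union {imp : L → L → L}
    (himp : ∀ (a b : L) (X : Set L), b ∈ Cn (X ∪ {a}) ↔ imp a b ∈ Cn X)
    {E : Set L} (hE : E.Finite) (y : L) :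
    ∃ φ : L, ∀ Z : Set L, φ ∈ Cn Z ↔ y ∈ Cn (Z ∪ E) := by
  induction E, hE using Set.Finite.induction_on with
  | empty => exact ⟨y, fun Z => by rw [union_empty]⟩
  | @insert a E _ _ ih =>
    obtain ⟨φ, hφ⟩ := ih
    refine ⟨imp a φ, fun Z => ?_⟩
    rw [← himp, hφ, union_assoc, singleton_union]

theorem exists_finite_subset_subset_Cn
    (hCnCpt : ∀ (X : Set L) (x : L), x ∈ Cn X → ∃ A : Set L, A.Finite ∧ A ⊆ X ∧ x ∈ Cn A)
    (hMono : ∀ X Y : Set L, X ⊆ Y → Cn X ⊆ Cn Y)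
    {X B : Set L} (hB : B.Finite) (hBX : B ⊆ Cn X) :
    ∃ A : Set L, A.Finite ∧ A ⊆ X ∧ B ⊆ Cn A := by
  choose! F hFfin hFX hbF using fun b (hb : b ∈ B) => hCnCpt X b (hBX hb)
  refine ⟨⋃ b ∈ B, F b, hB.biUnion hFfin, iUnion₂_subset hFX, fun b hb => ?_⟩
  exact hMono _ _ (subset_biUnion_of_mem hb) (hbF b hb)

/-- The finitely many premises used from `W` are internalised by the deduction theorem into one
formula, which then follows from both `P` and `Q`. -/
theorem mem_inter_union_of_mem_union
    (hIncl : ∀ X : Set L, X ⊆ Cn X)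
    (hMono : ∀ X Y : Set L, X ⊆ Y → Cn X ⊆ Cn Y)
    (hCnCpt : ∀ (X : Set L) (x : L), x ∈ Cn X → ∃ A : Set L, A.Finite ∧ A ⊆ X ∧ x ∈ Cn A)
    {imp : L → L → L} (himp : ∀ (a b : L) (X : Set L), b ∈ Cn (X ∪ {a}) ↔ imp a b ∈ Cn X)
    {P Q W : Set L} {y : L} (hPW : y ∈ Cn (P ∪ W)) (hQ : y ∈ Cn Q) :
    y ∈ Cn ((Cn P ∩ Cn Q) ∪ W) := by
  obtain ⟨H, hHfin, hHPW, hyH⟩ := hCnCpt _ y hPW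
  obtain ⟨φ, hφ⟩ := exists_forall_mem_iff_mem_union himp (hHfin.sdiff (t := P)) y
  have hφP : φ ∈ Cn P := by
    exact hMono (H ∩ P) P inter_subset_right ((hφ _).2 (by rwa [inter_union_sdiff]))
  have hφQ : φ ∈ Cn Q := (hφ Q).2 (hMono Q _ subset_union_left hQ)
  have hHW : H \ P ⊆ W := fun h hh => (hHPW hh.1).resolve_left hh.2
  exact hMono _ _ (union_subset_union_right _ hHW) ((hφ _).1 (hIncl _ ⟨hφP, hφQ⟩))

end Consequence

section Cumulative

variable {Cn C : Set L → Set L}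

theorem apply_union_eq_of_subset (hLA : LeftAb Cn C) (hCum : Cumul Cn C) {S W : Set L}
    (hW : W ⊆ C S) : C (S ∪ W) = C S := by
  have h := hCum S W (by rwa [hLA])
  rwa [hLA, hLA] at h

theorem apply_eq_of_subset_of_subset (hLA : LeftAb Cn C) (hCum : Cumul Cn C) {S T : Set L}
    (hST : S ⊆ C T) (hTS : T ⊆ C S) : C S = C T := by
  rw [← apply_union_eq_of_subset hLA hCum hTS, union_comm, apply_union_eq_of_subset hLA hCum hST]

theorem apply_Cn_eq (hIncl : ∀ X : Set L, X ⊆ Cn X) (hSup : Supra Cn C) (hLA : LeftAb Cn C)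
    (hCum : Cumul Cn C) (X : Set L) : C (Cn X) = C X := by
  simpa only [union_eq_self_of_subset_left (hIncl X)] using
    apply_union_eq_of_subset hLA hCum (hSup X)

end Cumulative

theorem SupracompactOp.compactOp {C : Set L → Set L} (hsub : ∀ X : Set L, X ⊆ C X)
    (hC : SupracompactOp C) : CompactOp C := by
  intro X x hx
  obtain ⟨A, hAfin, hAX, hA⟩ := hC X x hx
  exact ⟨A, hAfin, hAX, fun Y hAY hYX => hA Y hAY (hYX.trans (hsub X))⟩

section Compactness

variable {Cn C : Set L → Set L}
  (hIncl : ∀ X : Set L, X ⊆ Cn X)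
  (hMono : ∀ X Y : Set L, X ⊆ Y → Cn X ⊆ Cn Y)
  (hIdem : ∀ X : Set L, Cn (Cn X) = Cn X)
  (hCnCpt : ∀ (X : Set L) (x : L), x ∈ Cn X → ∃ A : Set L, A.Finite ∧ A ⊆ X ∧ x ∈ Cn A)
  {imp : L → L → L} (himp : ∀ (a b : L) (X : Set L), b ∈ Cn (X ∪ {a}) ↔ imp a b ∈ Cn X)
  (hSup : Supra Cn C) (hLA : LeftAb Cn C) (hDed : Deduc Cn C) (hCum : Cumul Cn C)
include hIncl hMono hIdem hCnCpt himp hSup hLA hDed hCum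

theorem subset_apply_inter_of_subset {X Y : Set L} (hY : Y ⊆ C X) :
    Y ⊆ C (Cn X ∩ Cn Y) := by
  intro y hy
  have hDedX : C X ⊆ Cn (Cn X ∪ C (Cn X ∩ Cn Y)) := by
    simpa only [apply_Cn_eq hIncl hSup hLA hCum] using hDed (Cn X) _ inter_subset_left
  have hyT := mem_inter_union_of_mem_union hIncl hMono hCnCpt himp (hDedX (hY hy)) (hIncl Y hy)
  rw [hIdem] at hyT
  rw [← hLA]
  exact hMono _ _ (union_subset ((hIncl _).trans (hSup _)) Subset.rfl) hyT

theorem CompactOp.supracompactOp (hC : CompactOp C) : SupracompactOp C := by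
  intro X x hx
  obtain ⟨B, hBfin, hBX, hB⟩ := hC (Cn X) x (by rwa [apply_Cn_eq hIncl hSup hLA hCum])
  obtain ⟨A, hAfin, hAX, hBA⟩ := exists_finite_subset_subset_Cn hCnCpt hMono hBfin hBX
  refine ⟨A, hAfin, hAX, fun Y hAY hYX => ?_⟩
  have hBT : B ⊆ Cn X ∩ Cn Y := subset_inter hBX (hBA.trans (hMono A Y hAY))
  rw [apply_eq_of_subset_of_subset hLA hCum
    (subset_apply_inter_of_subset hIncl hMono hIdem hCnCpt himp hSup hLA hDed hCum hYX)
    (inter_subset_right.trans (hSup Y))]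
  exact hB _ hBT inter_subset_left

end Compactness

theorem stmt10 (Cn C : Set L → Set L)
    (hIncl : ∀ X : Set L, X ⊆ Cn X)
    (hMono : ∀ X Y : Set L, X ⊆ Y → Cn X ⊆ Cn Y)
    (hIdem : ∀ X : Set L, Cn (Cn X) = Cn X)
    (hCnCpt : ∀ (X : Set L) (x : L), x ∈ Cn X → ∃ A : Set L, A.Finite ∧ A ⊆ X ∧ x ∈ Cn A)
    (hImp : ∃ imp : L → L → L, ∀ (a b : L) (X : Set L), b ∈ Cn (X ∪ {a}) ↔ imp a b ∈ Cn X)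
    (hSup : Supra Cn C) (hLA : LeftAb Cn C) (hDed : Deduc Cn C) (hCum : Cumul Cn C) :
    SupracompactOp C ↔ CompactOp C := by
  obtain ⟨imp, himp⟩ := hImp
  exact ⟨SupracompactOp.compactOp fun X => (hIncl X).trans (hSup X),
    CompactOp.supracompactOp hIncl hMono hIdem hCnCpt himp hSup hLA hDed hCum⟩

end DedNonmon
end

section
/- Let F be a finitary operation that is supraclassical, left-absorbing and deductive. Then for every finite A ⊆ L, F(A) = Cn(A ∪ ⋂_{B ⊆ A} F(B)), where the intersection is over all subsets B of the finite set A. -/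
open Set

namespace DedNonmon

variable {L : Type*}

theorem exists_mem_iff_mem_union_of_finite {Cn : Set L → Set L} {imp : L → L → L}
    (himp : ∀ (a b : L) (X : Set L), b ∈ Cn (X ∪ {a}) ↔ imp a b ∈ Cn X)
    {A : Set L} (hA : A.Finite) (x : L) :
    ∃ φ : L, ∀ Y : Set L, φ ∈ Cn Y ↔ x ∈ Cn (Y ∪ A) := by
  induction A, hA using Set.Finite.induction_on generalizing x with
  | empty => exact ⟨x, fun Y => by rw [union_empty]⟩
  | @insert a s _ _ ih =>
    obtain ⟨φ, hφ⟩ := ih x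
    refine ⟨imp a φ, fun Y => ?_⟩
    rw [← himp, hφ, union_assoc, singleton_union]

/-- With an implication, `Cn (A ∪ ·)` commutes with intersections of closed sets when `A` is
finite: all premises of `A` can be folded into a single formula `φ` lying in every `G i`. -/
theorem mem_Cn_union_biInter {Cn : Set L → Set L} {imp : L → L → L}
    (hIncl : ∀ X : Set L, X ⊆ Cn X)
    (himp : ∀ (a b : L) (X : Set L), b ∈ Cn (X ∪ {a}) ↔ imp a b ∈ Cn X)
    {ι : Type*} {p : ι → Prop} {G : ι → Set L} (hG : ∀ i, p i → Cn (G i) = G i)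
    {A : Set L} (hA : A.Finite) {x : L} (hx : ∀ i, p i → x ∈ Cn (A ∪ G i)) :
    x ∈ Cn (A ∪ ⋂ (i) (_ : p i), G i) := by
  obtain ⟨φ, hφ⟩ := exists_mem_iff_mem_union_of_finite himp hA x
  have hφG : φ ∈ ⋂ (i) (_ : p i), G i := mem_iInter₂.2 fun i hi => by
    rw [← hG i hi, hφ, union_comm]
    exact hx i hi
  rw [union_comm, ← hφ]
  exact hIncl _ hφG

theorem FinDeduc.subset_Cn_union_biInter {Cn F : Set L → Set L} {imp : L → L → L}
    (hIncl : ∀ X : Set L, X ⊆ Cn X)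
    (himp : ∀ (a b : L) (X : Set L), b ∈ Cn (X ∪ {a}) ↔ imp a b ∈ Cn X)
    (hLA : FinLeftAb Cn F) (hDed : FinDeduc Cn F) {A : Set L} (hA : A.Finite) :
    F A ⊆ Cn (A ∪ ⋂ (B : Set L) (_ : B ⊆ A), F B) := fun _ hx =>
  mem_Cn_union_biInter hIncl himp (fun B hB => hLA B (hA.subset hB)) hA
    fun B hB => hDed A B hA (hA.subset hB) hB hx

theorem FinSupra.Cn_union_biInter_subset {Cn F : Set L → Set L}
    (hIncl : ∀ X : Set L, X ⊆ Cn X) (hMono : ∀ X Y : Set L, X ⊆ Y → Cn X ⊆ Cn Y)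
    (hSup : FinSupra Cn F) (hLA : FinLeftAb Cn F) {A : Set L} (hA : A.Finite) :
    Cn (A ∪ ⋂ (B : Set L) (_ : B ⊆ A), F B) ⊆ F A := by
  have hsub : A ∪ ⋂ (B : Set L) (_ : B ⊆ A), F B ⊆ F A :=
    union_subset ((hIncl A).trans (hSup A hA)) (iInter₂_subset (κ := (· ⊆ A)) A subset_rfl)
  calc Cn (A ∪ ⋂ (B : Set L) (_ : B ⊆ A), F B) ⊆ Cn (F A) := hMono _ _ hsub
    _ = F A := hLA A hA

theorem stmt11_general (Cn F : Set L → Set L)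
    (hIncl : ∀ X : Set L, X ⊆ Cn X)
    (hMono : ∀ X Y : Set L, X ⊆ Y → Cn X ⊆ Cn Y)
    (hImp : ∃ imp : L → L → L, ∀ (a b : L) (X : Set L), b ∈ Cn (X ∪ {a}) ↔ imp a b ∈ Cn X)
    (hSup : FinSupra Cn F) (hLA : FinLeftAb Cn F) (hDed : FinDeduc Cn F) :
    ∀ A : Set L, A.Finite → F A = Cn (A ∪ ⋂ (B : Set L) (_ : B ⊆ A), F B) := by
  obtain ⟨imp, himp⟩ := hImp
  intro A hA
  exact (hDed.subset_Cn_union_biInter hIncl himp hLA hA).antisymm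
    (hSup.Cn_union_biInter_subset hIncl hMono hLA hA)

theorem stmt11 (Cn F : Set L → Set L)
    (hIncl : ∀ X : Set L, X ⊆ Cn X)
    (hMono : ∀ X Y : Set L, X ⊆ Y → Cn X ⊆ Cn Y)
    (hIdem : ∀ X : Set L, Cn (Cn X) = Cn X)
    (hCnCpt : ∀ (X : Set L) (x : L), x ∈ Cn X → ∃ A : Set L, A.Finite ∧ A ⊆ X ∧ x ∈ Cn A)
    (hImp : ∃ imp : L → L → L, ∀ (a b : L) (X : Set L), b ∈ Cn (X ∪ {a}) ↔ imp a b ∈ Cn X)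
    (hSup : FinSupra Cn F) (hLA : FinLeftAb Cn F) (hDed : FinDeduc Cn F) :
    ∀ A : Set L, A.Finite → F A = Cn (A ∪ ⋂ (B : Set L) (_ : B ⊆ A), F B) :=
  stmt11_general Cn F hIncl hMono hImp hSup hLA hDed

end DedNonmon
end

section
/- Let S : Set L → Set L be antitonic and strongly co-compact, with S(∅) finite, and let C be defined by C(X) = Cn(X ∪ S(X)) for all X ⊆ L. Then C is strongly co-compact: whenever x ∉ C(X) there is a finite A ⊆ X with x ∉ C(A). -/
open Set

namespace DedNonmon

variable {L : Type*}

/-! Antitonicity confines `S X` to the finite set `S ∅`, so only finitely many formulas can drop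
out of `S` on the way from a finite subset of `X` to `X`. Strong co-compactness gives one finite
witness set per such formula; their union `A ⊆ X` already has `S A = S X`, and then
`Cn (A ∪ S A) ⊆ Cn (X ∪ S X)`. -/

theorem Antitonic.exists_finite_subset_eq_of_strongCoCompact {S : Set L → Set L}
    (hS : Antitonic S) (hScc : StrongCoCompact S) (hSfin : (S ∅).Finite) (X : Set L) :
    ∃ A : Set L, A.Finite ∧ A ⊆ X ∧ S A = S X := by
  have hDfin : (S ∅ \ S X).Finite := hSfin.sdiff
  choose! B hBfin hBX hBnot using fun y (hy : y ∈ S ∅ \ S X) => hScc X y hy.2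
  set A := ⋃ y ∈ S ∅ \ S X, B y
  have hAX : A ⊆ X := iUnion₂_subset hBX
  refine ⟨A, hDfin.biUnion hBfin, hAX, (hS A X hAX).antisymm' fun z hzA => ?_⟩
  by_contra hzX
  have hzD : z ∈ S ∅ \ S X := ⟨hS ∅ A (empty_subset A) hzA, hzX⟩
  exact hBnot z hzD (hS (B z) A (subset_biUnion_of_mem hzD) hzA)

theorem strongCoCompact_cn_union {Cn S : Set L → Set L}
    (hMono : ∀ X Y : Set L, X ⊆ Y → Cn X ⊆ Cn Y)
    (hS : Antitonic S) (hScc : StrongCoCompact S) (hSfin : (S ∅).Finite) :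
    StrongCoCompact fun X => Cn (X ∪ S X) := by
  intro X x hx
  obtain ⟨A, hAfin, hAX, hSA⟩ := hS.exists_finite_subset_eq_of_strongCoCompact hScc hSfin X
  refine ⟨A, hAfin, hAX, fun hxA => hx ?_⟩
  exact hMono _ _ (union_subset_union hAX hSA.le) hxA

theorem stmt13_general (Cn C S : Set L → Set L)
    (hMono : ∀ X Y : Set L, X ⊆ Y → Cn X ⊆ Cn Y)
    (hS : Antitonic S) (hScc : StrongCoCompact S) (hSfin : (S ∅).Finite)
    (hC : ∀ X : Set L, C X = Cn (X ∪ S X)) :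
    StrongCoCompact C := by
  rw [funext hC]
  exact strongCoCompact_cn_union hMono hS hScc hSfin

theorem stmt13 (Cn C S : Set L → Set L)
    (hIncl : ∀ X : Set L, X ⊆ Cn X)
    (hMono : ∀ X Y : Set L, X ⊆ Y → Cn X ⊆ Cn Y)
    (hIdem : ∀ X : Set L, Cn (Cn X) = Cn X)
    (hCnCpt : ∀ (X : Set L) (x : L), x ∈ Cn X → ∃ A : Set L, A.Finite ∧ A ⊆ X ∧ x ∈ Cn A)
    (hImp : ∃ imp : L → L → L, ∀ (a b : L) (X : Set L), b ∈ Cn (X ∪ {a}) ↔ imp a b ∈ Cn X)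
    (hS : Antitonic S) (hScc : StrongCoCompact S) (hSfin : (S ∅).Finite)
    (hC : ∀ X : Set L, C X = Cn (X ∪ S X)) :
    StrongCoCompact C :=
  stmt13_general Cn C S hMono hS hScc hSfin hC

end DedNonmon
end

section
/- Let F be a finitary operation that is supraclassical, left-absorbing and deductive. Then there exists exactly one operation C : Set L → Set L that extends F and is supraclassical, left-absorbing, deductive, compact and strongly co-compact; it is given by C(X) = Cn(X ∪ ⋂_{B finite, B ⊆ X} F(B)). -/
open Set

namespace DedNonmon

variable {L : Type*}

/-! The candidate is `canonicalExt Cn F X = Cn (X ∪ K X)`, where `K X = finInter F X` collects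
what `F` infers from every finite subset of `X`. Every admissible `C` contains it: strong
co-compactness gives `K X ⊆ C X`, and `C X` is `Cn`-closed and contains `X`. Conversely, if
`x ∈ C X`, compactness yields a finite `A ⊆ X` such that `F` infers `x` from every finite `B` with
`A ⊆ B ⊆ X`; deductivity of `F` (from `A ∪ B` down to `B`) turns this into `(A → x) ∈ F B` for
every finite `B ⊆ X`, so the iterated implication lies in `K X` and `x ∈ Cn (X ∪ K X)`. The same
two facts show that the candidate itself extends `F` and has all the required properties. -/

def finInter (F : Set L → Set L) (X : Set L) : Set L :=
  ⋂ (B : Set L) (_ : B.Finite) (_ : B ⊆ X), F B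

def canonicalExt (Cn F : Set L → Set L) (X : Set L) : Set L := Cn (X ∪ finInter F X)

section

variable {Cn F : Set L → Set L}

theorem mem_finInter_iff {X : Set L} {x : L} :
    x ∈ finInter F X ↔ ∀ B : Set L, B.Finite → B ⊆ X → x ∈ F B := by
  simp [finInter]

theorem finInter_anti {X Y : Set L} (hYX : Y ⊆ X) : finInter F X ⊆ finInter F Y := fun _ hx =>
  mem_finInter_iff.2 fun B hB hBY => mem_finInter_iff.1 hx B hB (hBY.trans hYX)

theorem exists_imp_of_finite {imp : L → L → L}
    (himp : ∀ (a b : L) (X : Set L), b ∈ Cn (X ∪ {a}) ↔ imp a b ∈ Cn X)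
    {A : Set L} (hA : A.Finite) (x : L) : ∃ y : L, ∀ Z : Set L, x ∈ Cn (Z ∪ A) ↔ y ∈ Cn Z := by
  induction A, hA using Set.Finite.induction_on with
  | empty => exact ⟨x, fun Z => by rw [union_empty]⟩
  | @insert a s _ _ ih =>
    obtain ⟨y, hy⟩ := ih
    refine ⟨imp a y, fun Z => ?_⟩
    rw [← himp, ← hy, union_insert, ← union_singleton, union_right_comm]

theorem self_subset_of_finSupra (hIncl : ∀ X : Set L, X ⊆ Cn X) (hSup : FinSupra Cn F)
    {A : Set L} (hA : A.Finite) : A ⊆ F A :=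
  (hIncl A).trans (hSup A hA)

theorem mem_canonicalExt_of_forall_finite (hIncl : ∀ X : Set L, X ⊆ Cn X)
    (hImp : ∃ imp : L → L → L, ∀ (a b : L) (X : Set L), b ∈ Cn (X ∪ {a}) ↔ imp a b ∈ Cn X)
    (hSup : FinSupra Cn F) (hLA : FinLeftAb Cn F) (hDed : FinDeduc Cn F)
    {A X : Set L} {x : L} (hA : A.Finite) (hAX : A ⊆ X)
    (h : ∀ B : Set L, B.Finite → A ⊆ B → B ⊆ X → x ∈ F B) : x ∈ canonicalExt Cn F X := by
  obtain ⟨imp, himp⟩ := hImp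
  obtain ⟨y, hy⟩ := exists_imp_of_finite himp hA x
  have hyX : y ∈ finInter F X := by
    refine mem_finInter_iff.2 fun B hB hBX => ?_
    have hxAB : x ∈ Cn (A ∪ B ∪ F B) :=
      hDed _ _ (hA.union hB) hB subset_union_right
        (h _ (hA.union hB) subset_union_left (union_subset hAX hBX))
    rw [union_assoc, union_eq_right.2 (self_subset_of_finSupra hIncl hSup hB), union_comm] at hxAB
    rw [← hLA B hB]
    exact (hy _).1 hxAB
  have hxA : x ∈ Cn ((X ∪ finInter F X) ∪ A) := (hy _).2 (hIncl _ (Or.inr hyX))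
  rwa [union_eq_left.2 (hAX.trans subset_union_left)] at hxA

theorem canonicalExt_of_finite (hIncl : ∀ X : Set L, X ⊆ Cn X)
    (hMono : ∀ X Y : Set L, X ⊆ Y → Cn X ⊆ Cn Y)
    (hImp : ∃ imp : L → L → L, ∀ (a b : L) (X : Set L), b ∈ Cn (X ∪ {a}) ↔ imp a b ∈ Cn X)
    (hSup : FinSupra Cn F) (hLA : FinLeftAb Cn F) (hDed : FinDeduc Cn F)
    {A : Set L} (hA : A.Finite) : canonicalExt Cn F A = F A := by
  refine Subset.antisymm ?_ fun x hx => ?_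
  · rw [← hLA A hA]
    exact hMono _ _ (union_subset (self_subset_of_finSupra hIncl hSup hA)
      fun y hy => mem_finInter_iff.1 hy A hA Subset.rfl)
  · refine mem_canonicalExt_of_forall_finite hIncl hImp hSup hLA hDed hA Subset.rfl
      fun B _ hAB hBA => ?_
    rwa [Subset.antisymm hBA hAB]

theorem supra_canonicalExt (hMono : ∀ X Y : Set L, X ⊆ Y → Cn X ⊆ Cn Y) :
    Supra Cn (canonicalExt Cn F) := fun _ =>
  hMono _ _ subset_union_left

theorem leftAb_canonicalExt (hIdem : ∀ X : Set L, Cn (Cn X) = Cn X) :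
    LeftAb Cn (canonicalExt Cn F) := fun _ =>
  hIdem _

theorem deduc_canonicalExt (hIncl : ∀ X : Set L, X ⊆ Cn X)
    (hMono : ∀ X Y : Set L, X ⊆ Y → Cn X ⊆ Cn Y) : Deduc Cn (canonicalExt Cn F) :=
  fun X _ hYX => hMono _ _ <| union_subset_union_right X fun _ hx =>
    hIncl _ (Or.inr (finInter_anti hYX hx))

theorem compactOp_canonicalExt (hMono : ∀ X Y : Set L, X ⊆ Y → Cn X ⊆ Cn Y)
    (hCnCpt : ∀ (X : Set L) (x : L), x ∈ Cn X → ∃ A : Set L, A.Finite ∧ A ⊆ X ∧ x ∈ Cn A) :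
    CompactOp (canonicalExt Cn F) := by
  intro X x hx
  obtain ⟨D, hD, hDX, hxD⟩ := hCnCpt _ x hx
  refine ⟨D ∩ X, hD.inter_of_left X, inter_subset_right, fun Y hDY hYX => hMono D _ ?_ hxD⟩
  intro d hd
  rcases hDX hd with hdX | hdK
  · exact Or.inl (hDY ⟨hd, hdX⟩)
  · exact Or.inr (finInter_anti hYX hdK)

theorem finInter_subset_of_strongCoCompact {C : Set L → Set L}
    (hExt : ∀ A : Set L, A.Finite → C A = F A) (hSCC : StrongCoCompact C) (X : Set L) :
    finInter F X ⊆ C X := by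
  intro x hx
  by_contra hxC
  obtain ⟨B, hB, hBX, hxB⟩ := hSCC X x hxC
  exact hxB ((hExt B hB).symm ▸ mem_finInter_iff.1 hx B hB hBX)

theorem strongCoCompact_canonicalExt (hIncl : ∀ X : Set L, X ⊆ Cn X)
    (hExt : ∀ A : Set L, A.Finite → canonicalExt Cn F A = F A) :
    StrongCoCompact (canonicalExt Cn F) := by
  intro X x hx
  by_contra! h
  exact hx (hIncl _ (Or.inr (mem_finInter_iff.2 fun B hB hBX => hExt B hB ▸ h B hB hBX)))

theorem canonicalExt_subset (hIncl : ∀ X : Set L, X ⊆ Cn X)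
    (hMono : ∀ X Y : Set L, X ⊆ Y → Cn X ⊆ Cn Y)
    {C : Set L → Set L} (hExt : ∀ A : Set L, A.Finite → C A = F A) (hS : Supra Cn C)
    (hL : LeftAb Cn C) (hSCC : StrongCoCompact C) (X : Set L) :
    canonicalExt Cn F X ⊆ C X := by
  rw [← hL X]
  exact hMono _ _ (union_subset ((hIncl X).trans (hS X))
    (finInter_subset_of_strongCoCompact hExt hSCC X))

theorem subset_canonicalExt (hIncl : ∀ X : Set L, X ⊆ Cn X)
    (hImp : ∃ imp : L → L → L, ∀ (a b : L) (X : Set L), b ∈ Cn (X ∪ {a}) ↔ imp a b ∈ Cn X)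
    (hSup : FinSupra Cn F) (hLA : FinLeftAb Cn F) (hDed : FinDeduc Cn F)
    {C : Set L → Set L} (hExt : ∀ A : Set L, A.Finite → C A = F A) (hCpt : CompactOp C)
    (X : Set L) : C X ⊆ canonicalExt Cn F X := by
  intro x hx
  obtain ⟨A, hA, hAX, hAx⟩ := hCpt X x hx
  exact mem_canonicalExt_of_forall_finite hIncl hImp hSup hLA hDed hA hAX
    fun B hB hAB hBX => hExt B hB ▸ hAx B hAB hBX

end

theorem stmt14 (Cn F : Set L → Set L)
    (hIncl : ∀ X : Set L, X ⊆ Cn X)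
    (hMono : ∀ X Y : Set L, X ⊆ Y → Cn X ⊆ Cn Y)
    (hIdem : ∀ X : Set L, Cn (Cn X) = Cn X)
    (hCnCpt : ∀ (X : Set L) (x : L), x ∈ Cn X → ∃ A : Set L, A.Finite ∧ A ⊆ X ∧ x ∈ Cn A)
    (hImp : ∃ imp : L → L → L, ∀ (a b : L) (X : Set L), b ∈ Cn (X ∪ {a}) ↔ imp a b ∈ Cn X)
    (hSup : FinSupra Cn F) (hLA : FinLeftAb Cn F) (hDed : FinDeduc Cn F) :
    (∃! C : Set L → Set L,
      (∀ A : Set L, A.Finite → C A = F A) ∧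
        Supra Cn C ∧ LeftAb Cn C ∧ Deduc Cn C ∧ CompactOp C ∧ StrongCoCompact C) ∧
    (∀ C : Set L → Set L,
      ((∀ A : Set L, A.Finite → C A = F A) ∧
        Supra Cn C ∧ LeftAb Cn C ∧ Deduc Cn C ∧ CompactOp C ∧ StrongCoCompact C) →
      ∀ X : Set L, C X = Cn (X ∪ ⋂ (B : Set L) (_ : B.Finite) (_ : B ⊆ X), F B)) := by
  have hExt : ∀ A : Set L, A.Finite → canonicalExt Cn F A = F A := fun _ =>
    canonicalExt_of_finite hIncl hMono hImp hSup hLA hDed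
  have hC0 : (∀ A : Set L, A.Finite → canonicalExt Cn F A = F A) ∧
      Supra Cn (canonicalExt Cn F) ∧ LeftAb Cn (canonicalExt Cn F) ∧ Deduc Cn (canonicalExt Cn F) ∧
      CompactOp (canonicalExt Cn F) ∧ StrongCoCompact (canonicalExt Cn F) :=
    ⟨hExt, supra_canonicalExt hMono, leftAb_canonicalExt hIdem, deduc_canonicalExt hIncl hMono,
      compactOp_canonicalExt hMono hCnCpt, strongCoCompact_canonicalExt hIncl hExt⟩
  have hUniq : ∀ C : Set L → Set L,
      ((∀ A : Set L, A.Finite → C A = F A) ∧ Supra Cn C ∧ LeftAb Cn C ∧ Deduc Cn C ∧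
        CompactOp C ∧ StrongCoCompact C) → C = canonicalExt Cn F := by
    rintro C ⟨hCExt, hS, hL, -, hCpt, hSCC⟩
    funext X
    exact Subset.antisymm (subset_canonicalExt hIncl hImp hSup hLA hDed hCExt hCpt X)
      (canonicalExt_subset hIncl hMono hCExt hS hL hSCC X)
  exact ⟨⟨canonicalExt Cn F, hC0, hUniq⟩, fun C hC X => congrFun (hUniq C hC) X⟩

end DedNonmon
end

section
/- Let F be a finitary operation that is supraclassical, left-absorbing and deductive, and let C be its unique supraclassical, left-absorbing, deductive, compact and strongly co-compact extension. Then for all X ⊆ L and x ∈ L: x ∈ C(X) if and only if there is a finite A ⊆ X such that x ∈ F(A ∪ B) for every finite B ⊆ X. -/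
open Set

namespace DedNonmon

variable {L : Type*}

/-! The forward direction is compactness of `C`, read through `C = F` on finite sets.
Conversely, if `x ∉ C X`, internalise a finite witness `A` of the right-hand side
as the single formula `y = A → x`. Then `y ∉ C X`, since `A ⊆ X ⊆ C X` and `C X` is closed
under `Cn`; strong co-compactness yields a finite `A₁ ⊆ X` with `y ∉ F A₁`. But deductivity gives
`F (A ∪ A₁) ⊆ Cn (F A₁ ∪ A)`, so `x ∈ F (A ∪ A₁)` forces `y ∈ Cn (F A₁) = F A₁`. -/

section

variable {Cn F C : Set L → Set L}

theorem exists_forall_mem_union_iff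
    (hImp : ∃ imp : L → L → L, ∀ (a b : L) (X : Set L), b ∈ Cn (X ∪ {a}) ↔ imp a b ∈ Cn X)
    {A : Set L} (hA : A.Finite) (x : L) :
    ∃ y : L, ∀ Z : Set L, x ∈ Cn (Z ∪ A) ↔ y ∈ Cn Z := by
  obtain ⟨imp, himp⟩ := hImp
  induction A, hA using Set.Finite.induction_on generalizing x with
  | empty => exact ⟨x, fun Z => by rw [union_empty]⟩
  | @insert a s _ _ ih =>
    obtain ⟨y, hy⟩ := ih x
    refine ⟨imp a y, fun Z => ?_⟩
    rw [← himp, ← hy, union_assoc, singleton_union]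

theorem cn_union_subset_of_subset (hIncl : ∀ X : Set L, X ⊆ Cn X)
    (hMono : ∀ X Y : Set L, X ⊆ Y → Cn X ⊆ Cn Y) (hCsup : Supra Cn C) (hCla : LeftAb Cn C)
    {A X : Set L} (hAX : A ⊆ X) : Cn (C X ∪ A) ⊆ C X := by
  have hXC : X ⊆ C X := (hIncl X).trans (hCsup X)
  calc Cn (C X ∪ A) ⊆ Cn (C X) := hMono _ _ (union_subset subset_rfl (hAX.trans hXC))
    _ = C X := hCla X

theorem FinDeduc.subset_cn_union (hIncl : ∀ X : Set L, X ⊆ Cn X)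
    (hMono : ∀ X Y : Set L, X ⊆ Y → Cn X ⊆ Cn Y) (hSup : FinSupra Cn F) (hDed : FinDeduc Cn F)
    {A B : Set L} (hA : A.Finite) (hB : B.Finite) : F (A ∪ B) ⊆ Cn (F B ∪ A) := by
  have hBF : B ⊆ F B := (hIncl B).trans (hSup B hB)
  calc F (A ∪ B) ⊆ Cn ((A ∪ B) ∪ F B) := hDed _ _ (hA.union hB) hB subset_union_right
    _ ⊆ Cn (F B ∪ A) := hMono _ _ <|
        union_subset (union_subset subset_union_right (hBF.trans subset_union_left))
          subset_union_left

theorem exists_finite_forall_mem_of_mem (hExt : ∀ A : Set L, A.Finite → C A = F A)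
    (hCcpt : CompactOp C) {X : Set L} {x : L} (hx : x ∈ C X) :
    ∃ A : Set L, A.Finite ∧ A ⊆ X ∧ ∀ B : Set L, B.Finite → B ⊆ X → x ∈ F (A ∪ B) := by
  obtain ⟨A, hA, hAX, hAx⟩ := hCcpt X x hx
  refine ⟨A, hA, hAX, fun B hB hBX => ?_⟩
  rw [← hExt _ (hA.union hB)]
  exact hAx _ subset_union_left (union_subset hAX hBX)

end

theorem stmt15_general (Cn F C : Set L → Set L)
    (hIncl : ∀ X : Set L, X ⊆ Cn X)
    (hMono : ∀ X Y : Set L, X ⊆ Y → Cn X ⊆ Cn Y)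
    (hImp : ∃ imp : L → L → L, ∀ (a b : L) (X : Set L), b ∈ Cn (X ∪ {a}) ↔ imp a b ∈ Cn X)
    (hSup : FinSupra Cn F) (hLA : FinLeftAb Cn F) (hDed : FinDeduc Cn F)
    (hExt : ∀ A : Set L, A.Finite → C A = F A)
    (hCsup : Supra Cn C) (hCla : LeftAb Cn C)
    (hCcpt : CompactOp C) (hCscc : StrongCoCompact C) :
    ∀ (X : Set L) (x : L),
      x ∈ C X ↔ ∃ A : Set L, A.Finite ∧ A ⊆ X ∧
        ∀ B : Set L, B.Finite → B ⊆ X → x ∈ F (A ∪ B) := by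
  refine fun X x => ⟨exists_finite_forall_mem_of_mem hExt hCcpt, ?_⟩
  rintro ⟨A, hA, hAX, hAx⟩
  by_contra hx
  obtain ⟨y, hy⟩ := exists_forall_mem_union_iff hImp hA x
  have hyX : y ∉ C X := fun hyX =>
    hx (cn_union_subset_of_subset hIncl hMono hCsup hCla hAX ((hy _).2 (hIncl _ hyX)))
  obtain ⟨A₁, hA₁, hA₁X, hyA₁⟩ := hCscc X y hyX
  have hxA₁ : x ∈ Cn (F A₁ ∪ A) :=
    hDed.subset_cn_union hIncl hMono hSup hA hA₁ (hAx A₁ hA₁ hA₁X)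
  rw [hExt A₁ hA₁, ← hLA A₁ hA₁] at hyA₁
  exact hyA₁ ((hy _).1 hxA₁)

theorem stmt15 (Cn F C : Set L → Set L)
    (hIncl : ∀ X : Set L, X ⊆ Cn X)
    (hMono : ∀ X Y : Set L, X ⊆ Y → Cn X ⊆ Cn Y)
    (hIdem : ∀ X : Set L, Cn (Cn X) = Cn X)
    (hCnCpt : ∀ (X : Set L) (x : L), x ∈ Cn X → ∃ A : Set L, A.Finite ∧ A ⊆ X ∧ x ∈ Cn A)
    (hImp : ∃ imp : L → L → L, ∀ (a b : L) (X : Set L), b ∈ Cn (X ∪ {a}) ↔ imp a b ∈ Cn X)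
    (hSup : FinSupra Cn F) (hLA : FinLeftAb Cn F) (hDed : FinDeduc Cn F)
    (hExt : ∀ A : Set L, A.Finite → C A = F A)
    (hCsup : Supra Cn C) (hCla : LeftAb Cn C) (hCded : Deduc Cn C)
    (hCcpt : CompactOp C) (hCscc : StrongCoCompact C) :
    ∀ (X : Set L) (x : L),
      x ∈ C X ↔ ∃ A : Set L, A.Finite ∧ A ⊆ X ∧
        ∀ B : Set L, B.Finite → B ⊆ X → x ∈ F (A ∪ B) :=
  stmt15_general Cn F C hIncl hMono hImp hSup hLA hDed hExt hCsup hCla hCcpt hCscc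

end DedNonmon
end

section
/- Let F be a finitary operation that is supraclassical, left-absorbing, right-absorbing and deductive. Then there exists exactly one operation C : Set L → Set L that extends F and is supraclassical, left-absorbing, right-absorbing, deductive, compact and co-compact. -/
/-!
The extension is the limit inferior of `F` along the finite subsets of the theory `Cn X`, directed
by inclusion: `x ∈ C X` iff `x ∈ F B` for all finite `B ⊆ Cn X` containing some fixed finite `A`.
Right absorption makes it agree with `F` on finite sets, and compactness of `Cn` transfers the
finitary properties of `F` to `C`. By the deduction theorem, a conclusion `x` drawn from finitely
many extra premises `A` can be traded for a single formula `y`, the iterated implication from `A`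
to `x`, and deductivity of `F` turns `x ∈ F (D ∪ A)` into `y ∈ F D`. This gives deductivity of `C`,
and uniqueness: for `x ∈ C X` it puts `y` into `F D` for all finite `D ⊆ Cn X`, hence, by
co-compactness, into any competitor `C' X`, and then `x ∈ Cn (C' X ∪ A) = C' X`; conversely,
compactness of `C'` puts `C' X` inside `C X`.
-/
open Set

namespace DedNonmon

variable {L : Type*}

variable {c : ClosureOperator (Set L)} {F C : Set L → Set L} {A B D X : Set L}

def IsCompactClosure (c : ClosureOperator (Set L)) : Prop :=
  ∀ (X : Set L) (x : L), x ∈ c X → ∃ A : Set L, A.Finite ∧ A ⊆ X ∧ x ∈ c A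

theorem IsCompactClosure.exists_finite_subset (hc : IsCompactClosure c) (hA : A.Finite)
    (hAX : A ⊆ c X) : ∃ A₀ : Set L, A₀.Finite ∧ A₀ ⊆ X ∧ A ⊆ c A₀ := by
  induction A, hA using Finite.induction_on with
  | empty => exact ⟨∅, finite_empty, empty_subset _, empty_subset _⟩
  | @insert a A _ _ ih =>
    obtain ⟨A₀, hA₀, hA₀X, hAA₀⟩ := ih ((subset_insert a A).trans hAX)
    obtain ⟨B, hB, hBX, haB⟩ := hc X a (hAX (mem_insert a A))
    refine ⟨A₀ ∪ B, hA₀.union hB, union_subset hA₀X hBX, insert_subset ?_ ?_⟩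
    · exact c.monotone subset_union_right haB
    · exact hAA₀.trans (c.monotone subset_union_left)

theorem exists_mem_union_iff_of_finite {Cn : Set L → Set L} {imp : L → L → L}
    (himp : ∀ (a b : L) (X : Set L), b ∈ Cn (X ∪ {a}) ↔ imp a b ∈ Cn X) (hA : A.Finite)
    (x : L) : ∃ y : L, ∀ Z : Set L, x ∈ Cn (Z ∪ A) ↔ y ∈ Cn Z := by
  induction A, hA using Finite.induction_on generalizing x with
  | empty => exact ⟨x, fun Z => by rw [union_empty]⟩
  | @insert a A _ _ ih =>
    obtain ⟨y, hy⟩ := ih x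
    refine ⟨imp a y, fun Z => ?_⟩
    rw [union_insert, ← insert_union, ← union_singleton, hy, himp]

theorem FinRightAb.eq_of_subset_of_subset_closure (hRA : FinRightAb c F) (hA : A.Finite)
    (hB : B.Finite) (hAB : A ⊆ B) (hBA : B ⊆ c A) : F B = F A :=
  hRA B A hB hA (le_antisymm (c.le_closure_iff.1 hBA) (c.monotone hAB))

theorem FinDeduc.subset_closure_union (hSup : FinSupra c F) (hDed : FinDeduc c F)
    (hD : D.Finite) (hA : A.Finite) : F (D ∪ A) ⊆ c (F D ∪ A) := by
  refine (hDed _ D (hD.union hA) hD subset_union_left).trans (c.monotone ?_)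
  have hDF : D ⊆ F D := (c.le_closure D).trans (hSup D hD)
  exact union_subset (union_subset_union_left A hDF) subset_union_left

theorem FinDeduc.mem_of_mem_union (hSup : FinSupra c F) (hLA : FinLeftAb c F)
    (hDed : FinDeduc c F) (hD : D.Finite) (hA : A.Finite) {x y : L}
    (hxy : ∀ Z : Set L, x ∈ c (Z ∪ A) ↔ y ∈ c Z) (hx : x ∈ F (D ∪ A)) : y ∈ F D := by
  rw [← hLA D hD, ← hxy]
  exact hDed.subset_closure_union hSup hD hA hx

def finLiminf (c : ClosureOperator (Set L)) (F : Set L → Set L) (X : Set L) : Set L :=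
  {x | ∃ A : Set L, A.Finite ∧ A ⊆ c X ∧ ∀ B : Set L, B.Finite → A ⊆ B → B ⊆ c X → x ∈ F B}

theorem mem_finLiminf_of_forall {x : L} (h : ∀ B : Set L, B.Finite → B ⊆ c X → x ∈ F B) :
    x ∈ finLiminf c F X :=
  ⟨∅, finite_empty, empty_subset _, fun B hB _ hBX => h B hB hBX⟩

theorem exists_forall_subset_of_subset_finLiminf (hD : D.Finite) (hDX : D ⊆ finLiminf c F X) :
    ∃ A : Set L, A.Finite ∧ A ⊆ c X ∧ ∀ B : Set L, B.Finite → A ⊆ B → B ⊆ c X → D ⊆ F B := by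
  induction D, hD using Finite.induction_on with
  | empty => exact ⟨∅, finite_empty, empty_subset _, fun _ _ _ _ => empty_subset _⟩
  | @insert d D _ _ ih =>
    obtain ⟨A, hA, hAX, hDF⟩ := ih ((subset_insert d D).trans hDX)
    obtain ⟨A', hA', hA'X, hdF⟩ := hDX (mem_insert d D)
    refine ⟨A ∪ A', hA.union hA', union_subset hAX hA'X, fun B hB hAB hBX => ?_⟩
    exact insert_subset (hdF B hB (subset_union_right.trans hAB) hBX)
      (hDF B hB (subset_union_left.trans hAB) hBX)

theorem finLiminf_eq_of_finite (hRA : FinRightAb c F) (hA : A.Finite) :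
    finLiminf c F A = F A := by
  ext x
  constructor
  · rintro ⟨A', hA', hA'A, hx⟩
    have hsub : A' ∪ A ⊆ c A := union_subset hA'A (c.le_closure A)
    rw [← hRA.eq_of_subset_of_subset_closure hA (hA'.union hA) subset_union_right hsub]
    exact hx _ (hA'.union hA) subset_union_left hsub
  · intro hx
    refine ⟨A, hA, c.le_closure A, fun B hB hAB hBA => ?_⟩
    rwa [hRA.eq_of_subset_of_subset_closure hA hB hAB hBA]

theorem supra_finLiminf (hSup : FinSupra c F) : Supra c (finLiminf c F) := fun _ x hx =>
  ⟨{x}, finite_singleton x, singleton_subset_iff.2 hx,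
    fun B hB hxB _ => hSup B hB (c.le_closure B (hxB rfl))⟩

theorem leftAb_finLiminf (hc : IsCompactClosure c) (hLA : FinLeftAb c F) :
    LeftAb c (finLiminf c F) := by
  refine fun X => Subset.antisymm ?_ (c.le_closure _)
  intro x hx
  obtain ⟨D, hD, hDX, hxD⟩ := hc _ x hx
  obtain ⟨A, hA, hAX, hDF⟩ := exists_forall_subset_of_subset_finLiminf hD hDX
  refine ⟨A, hA, hAX, fun B hB hAB hBX => ?_⟩
  rw [← hLA B hB]
  exact c.monotone (hDF B hB hAB hBX) hxD

theorem rightAb_finLiminf : RightAb c (finLiminf c F) := by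
  intro X Y h
  simp only [finLiminf, h]

theorem deduc_finLiminf (hc : IsCompactClosure c) {imp : L → L → L}
    (himp : ∀ (a b : L) (X : Set L), b ∈ c (X ∪ {a}) ↔ imp a b ∈ c X) (hSup : FinSupra c F)
    (hLA : FinLeftAb c F) (hRA : FinRightAb c F) (hDed : FinDeduc c F) :
    Deduc c (finLiminf c F) := by
  rintro X Y hYX x ⟨A, hA, hAX, hx⟩
  obtain ⟨A₀, hA₀, hA₀X, hAA₀⟩ := hc.exists_finite_subset hA hAX
  obtain ⟨y, hxy⟩ := exists_mem_union_iff_of_finite himp hA₀ x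
  have hy : y ∈ finLiminf c F Y := by
    refine mem_finLiminf_of_forall fun B hB hBY => hDed.mem_of_mem_union hSup hLA hB hA₀ hxy ?_
    have hBA₀ : (B ∪ A₀).Finite := hB.union hA₀
    have hBA₀X : B ∪ A₀ ⊆ c X :=
      union_subset (hBY.trans (c.monotone hYX)) (hA₀X.trans (c.le_closure X))
    rw [← hRA.eq_of_subset_of_subset_closure hBA₀ (hBA₀.union hA) subset_union_left
      (union_subset (c.le_closure _) (hAA₀.trans (c.monotone subset_union_right)))]
    exact hx _ (hBA₀.union hA) subset_union_right (union_subset hBA₀X hAX)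
  rw [← union_eq_left.2 (hA₀X.trans subset_union_left), hxy]
  exact c.le_closure _ (Or.inr hy)

theorem compactOp_finLiminf (hc : IsCompactClosure c) : CompactOp (finLiminf c F) := by
  rintro X x ⟨A, hA, hAX, hx⟩
  obtain ⟨A₀, hA₀, hA₀X, hAA₀⟩ := hc.exists_finite_subset hA hAX
  refine ⟨A₀, hA₀, hA₀X, fun Y hA₀Y hYX => ⟨A, hA, hAA₀.trans (c.monotone hA₀Y), ?_⟩⟩
  exact fun B hB hAB hBY => hx B hB hAB (hBY.trans (c.monotone hYX))

theorem coCompact_finLiminf (hRA : FinRightAb c F) : CoCompact c (finLiminf c F) := by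
  intro X x hx
  by_contra! h
  exact hx (mem_finLiminf_of_forall fun B hB hBX => finLiminf_eq_of_finite hRA hB ▸ h B hB hBX)

theorem subset_finLiminf (hext : ∀ A : Set L, A.Finite → C A = F A) (hRA : RightAb c C)
    (hCpt : CompactOp C) : C X ⊆ finLiminf c F X := by
  intro x hx
  rw [hRA X (c X) (c.idempotent X).symm] at hx
  obtain ⟨A, hA, hAX, hx⟩ := hCpt (c X) x hx
  exact ⟨A, hA, hAX, fun B hB hAB hBX => hext B hB ▸ hx B hAB hBX⟩

theorem finLiminf_subset {imp : L → L → L}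
    (himp : ∀ (a b : L) (X : Set L), b ∈ c (X ∪ {a}) ↔ imp a b ∈ c X) (hSup : FinSupra c F)
    (hLA : FinLeftAb c F) (hDed : FinDeduc c F) (hext : ∀ A : Set L, A.Finite → C A = F A)
    (hSupC : Supra c C) (hLAC : LeftAb c C) (hCo : CoCompact c C) :
    finLiminf c F X ⊆ C X := by
  rintro x ⟨A, hA, hAX, hx⟩
  obtain ⟨y, hxy⟩ := exists_mem_union_iff_of_finite himp hA x
  have hy : y ∈ C X := by
    by_contra hy
    obtain ⟨D, hD, hDX, hyD⟩ := hCo X y hy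
    rw [hext D hD] at hyD
    exact hyD (hDed.mem_of_mem_union hSup hLA hD hA hxy
      (hx _ (hD.union hA) subset_union_right (union_subset hDX hAX)))
  rw [← hLAC X, ← union_eq_left.2 (hAX.trans (hSupC X)), hxy, hLAC]
  exact hy

theorem stmt17 (Cn F : Set L → Set L)
    (hIncl : ∀ X : Set L, X ⊆ Cn X)
    (hMono : ∀ X Y : Set L, X ⊆ Y → Cn X ⊆ Cn Y)
    (hIdem : ∀ X : Set L, Cn (Cn X) = Cn X)
    (hCnCpt : ∀ (X : Set L) (x : L), x ∈ Cn X → ∃ A : Set L, A.Finite ∧ A ⊆ X ∧ x ∈ Cn A)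
    (hImp : ∃ imp : L → L → L, ∀ (a b : L) (X : Set L), b ∈ Cn (X ∪ {a}) ↔ imp a b ∈ Cn X)
    (hSup : FinSupra Cn F) (hLA : FinLeftAb Cn F) (hRA : FinRightAb Cn F)
    (hDed : FinDeduc Cn F) :
    ∃! C : Set L → Set L,
      (∀ A : Set L, A.Finite → C A = F A) ∧
      Supra Cn C ∧ LeftAb Cn C ∧ RightAb Cn C ∧ Deduc Cn C ∧ CompactOp C ∧ CoCompact Cn C := by
  obtain ⟨imp, himp⟩ := hImp
  obtain ⟨c, rfl⟩ : ∃ c : ClosureOperator (Set L), ⇑c = Cn :=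
    ⟨{ toFun := Cn, monotone' := hMono, le_closure' := hIncl, idempotent' := hIdem }, rfl⟩
  refine ⟨finLiminf c F, ⟨fun A hA => finLiminf_eq_of_finite hRA hA, supra_finLiminf hSup,
    leftAb_finLiminf hCnCpt hLA, rightAb_finLiminf, deduc_finLiminf hCnCpt himp hSup hLA hRA hDed,
    compactOp_finLiminf hCnCpt, coCompact_finLiminf hRA⟩, ?_⟩
  rintro C ⟨hext, hSupC, hLAC, hRAC, -, hCptC, hCoC⟩
  funext X
  exact (subset_finLiminf hext hRAC hCptC).antisymm
    (finLiminf_subset himp hSup hLA hDed hext hSupC hLAC hCoC)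

end DedNonmon
end

section
/- Let F be a finitary operation that is supraclassical, left-absorbing, right-absorbing and deductive, and let C be its unique supraclassical, left-absorbing, right-absorbing, deductive, compact and co-compact extension. Then for all X ⊆ L and x ∈ L: x ∈ C(X) if and only if there is a finite A ⊆ X such that x ∈ F(A ∪ B) for every finite B ⊆ Cn(X). -/
/-!
Write `y` for the formula `a₁ → (a₂ → ⋯ → x)` built from a finite `A = {a₁, …, aₙ}`, so that
`x ∈ Cn (Z ∪ A) ↔ y ∈ Cn Z` for every `Z`. If `x ∈ F (A ∪ B)` for all finite `B ⊆ Cn X`, then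
deductivity of `F` gives `y ∈ F B` for all those `B`; were `x ∉ C X`, also `y ∉ C X` (as `C X`
is closed and contains `A`), and co-compactness would produce a finite `B ⊆ Cn X` with
`y ∉ C B = F B`. Conversely, compactness of `C` at `Cn X` (where `C (Cn X) = C X`) gives a finite
`A₀ ⊆ Cn X`, which compactness of `Cn` pulls back to a finite `A ⊆ X` with `A₀ ⊆ Cn A`; then
`F (A ∪ B) = F (A₀ ∪ A ∪ B) = C (A₀ ∪ A ∪ B) ∋ x` by right absorption.
-/

open Set

namespace DedNonmon

variable {L : Type*}

section Closure

variable (c : ClosureOperator (Set L))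

theorem closure_union_eq_of_subset_closure {A B : Set L} (h : A ⊆ c B) : c (A ∪ B) = c B :=
  (c.le_closure_iff.1 (union_subset h (c.le_closure B))).antisymm
    (c.monotone subset_union_right)

theorem exists_finite_subset_subset_closure
    (hcCpt : ∀ (X : Set L) (x : L), x ∈ c X → ∃ A : Set L, A.Finite ∧ A ⊆ X ∧ x ∈ c A)
    {X A : Set L} (hA : A.Finite) (hAX : A ⊆ c X) :
    ∃ A' : Set L, A'.Finite ∧ A' ⊆ X ∧ A ⊆ c A' := by
  choose! S hSfin hSX hS using fun a (ha : a ∈ A) => hcCpt X a (hAX ha)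
  refine ⟨⋃ a ∈ A, S a, hA.biUnion hSfin, iUnion₂_subset hSX, fun a ha => ?_⟩
  exact c.monotone (subset_biUnion_of_mem ha) (hS a ha)

theorem exists_forall_mem_closure_union_iff {imp : L → L → L}
    (himp : ∀ (a b : L) (X : Set L), b ∈ c (X ∪ {a}) ↔ imp a b ∈ c X)
    {A : Set L} (hA : A.Finite) (x : L) :
    ∃ y : L, ∀ Z : Set L, x ∈ c (Z ∪ A) ↔ y ∈ c Z := by
  induction A, hA using Set.Finite.induction_on with
  | empty => exact ⟨x, fun Z => by rw [union_empty]⟩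
  | @insert a A _ _ ih =>
    obtain ⟨y, hy⟩ := ih
    refine ⟨imp a y, fun Z => ?_⟩
    rw [union_insert, ← union_singleton, union_right_comm, hy, himp]

end Closure

section Extension

variable (c : ClosureOperator (Set L)) {F C : Set L → Set L}

theorem apply_union_subset_closure_apply_union (hSup : FinSupra c F) (hDed : FinDeduc c F)
    {A B : Set L} (hA : A.Finite) (hB : B.Finite) : F (A ∪ B) ⊆ c (F B ∪ A) := by
  have hBF : B ⊆ F B := (c.le_closure B).trans (hSup B hB)
  have hsub : A ∪ B ∪ F B ⊆ c (F B ∪ A) :=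
    (union_subset (union_subset subset_union_right (hBF.trans subset_union_left))
      subset_union_left).trans (c.le_closure _)
  exact (hDed _ _ (hA.union hB) hB subset_union_right).trans (c.le_closure_iff.1 hsub)

theorem exists_finite_forall_mem_union_of_mem
    (hcCpt : ∀ (X : Set L) (x : L), x ∈ c X → ∃ A : Set L, A.Finite ∧ A ⊆ X ∧ x ∈ c A)
    (hRA : FinRightAb c F) (hExt : ∀ A : Set L, A.Finite → C A = F A)
    (hCra : RightAb c C) (hCcpt : CompactOp C) {X : Set L} {x : L} (hx : x ∈ C X) :
    ∃ A : Set L, A.Finite ∧ A ⊆ X ∧ ∀ B : Set L, B.Finite → B ⊆ c X → x ∈ F (A ∪ B) := by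
  rw [hCra X (c X) (c.idempotent X).symm] at hx
  obtain ⟨A₀, hA₀, hA₀X, hCA₀⟩ := hCcpt (c X) x hx
  obtain ⟨A, hA, hAX, hA₀A⟩ := exists_finite_subset_subset_closure c hcCpt hA₀ hA₀X
  refine ⟨A, hA, hAX, fun B hB hBX => ?_⟩
  have hY : (A₀ ∪ (A ∪ B)).Finite := hA₀.union (hA.union hB)
  have hxY : x ∈ C (A₀ ∪ (A ∪ B)) :=
    hCA₀ _ subset_union_left
      (union_subset hA₀X (union_subset (hAX.trans (c.le_closure X)) hBX))
  rwa [hExt _ hY, hRA _ _ hY (hA.union hB) (closure_union_eq_of_subset_closure c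
    (hA₀A.trans (c.monotone subset_union_left)))] at hxY

theorem mem_of_exists_finite_forall_mem_union {imp : L → L → L}
    (himp : ∀ (a b : L) (X : Set L), b ∈ c (X ∪ {a}) ↔ imp a b ∈ c X)
    (hSup : FinSupra c F) (hLA : FinLeftAb c F) (hDed : FinDeduc c F)
    (hExt : ∀ A : Set L, A.Finite → C A = F A)
    (hCsup : Supra c C) (hCla : LeftAb c C) (hCcc : CoCompact c C) {X A : Set L} {x : L}
    (hA : A.Finite) (hAX : A ⊆ X) (hF : ∀ B : Set L, B.Finite → B ⊆ c X → x ∈ F (A ∪ B)) :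
    x ∈ C X := by
  obtain ⟨y, hy⟩ := exists_forall_mem_closure_union_iff c himp hA x
  have hyF : ∀ B : Set L, B.Finite → B ⊆ c X → y ∈ F B := fun B hB hBX => by
    rw [← hLA B hB, ← hy]
    exact apply_union_subset_closure_apply_union c hSup hDed hA hB (hF B hB hBX)
  by_contra hxC
  have hyC : y ∉ C X := fun hyC => hxC <| by
    have hCX : c.IsClosed (C X) := c.isClosed_iff.2 (hCla X)
    refine hCX.closure_le_iff.2 (union_subset subset_rfl ?_) ((hy _).2 (c.le_closure _ hyC))
    exact hAX.trans ((c.le_closure X).trans (hCsup X))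
  obtain ⟨B, hB, hBX, hyB⟩ := hCcc X y hyC
  exact hyB (hExt B hB ▸ hyF B hB hBX)

end Extension

theorem stmt18_general (Cn F C : Set L → Set L)
    (hIncl : ∀ X : Set L, X ⊆ Cn X)
    (hMono : ∀ X Y : Set L, X ⊆ Y → Cn X ⊆ Cn Y)
    (hIdem : ∀ X : Set L, Cn (Cn X) = Cn X)
    (hCnCpt : ∀ (X : Set L) (x : L), x ∈ Cn X → ∃ A : Set L, A.Finite ∧ A ⊆ X ∧ x ∈ Cn A)
    (hImp : ∃ imp : L → L → L, ∀ (a b : L) (X : Set L), b ∈ Cn (X ∪ {a}) ↔ imp a b ∈ Cn X)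
    (hSup : FinSupra Cn F) (hLA : FinLeftAb Cn F) (hRA : FinRightAb Cn F)
    (hDed : FinDeduc Cn F)
    (hExt : ∀ A : Set L, A.Finite → C A = F A)
    (hCsup : Supra Cn C) (hCla : LeftAb Cn C) (hCra : RightAb Cn C)
    (hCcpt : CompactOp C) (hCcc : CoCompact Cn C) :
    ∀ (X : Set L) (x : L),
      x ∈ C X ↔ ∃ A : Set L, A.Finite ∧ A ⊆ X ∧
        ∀ B : Set L, B.Finite → B ⊆ Cn X → x ∈ F (A ∪ B) := by
  let c : ClosureOperator (Set L) :=
    .mk' Cn (fun X Y => hMono X Y) hIncl (fun X => (hIdem X).le)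
  obtain ⟨imp, himp⟩ := hImp
  intro X x
  constructor
  · exact exists_finite_forall_mem_union_of_mem c hCnCpt hRA hExt hCra hCcpt
  · rintro ⟨A, hA, hAX, hF⟩
    exact mem_of_exists_finite_forall_mem_union c himp hSup hLA hDed hExt hCsup hCla hCcc hA hAX hF

theorem stmt18 (Cn F C : Set L → Set L)
    (hIncl : ∀ X : Set L, X ⊆ Cn X)
    (hMono : ∀ X Y : Set L, X ⊆ Y → Cn X ⊆ Cn Y)
    (hIdem : ∀ X : Set L, Cn (Cn X) = Cn X)
    (hCnCpt : ∀ (X : Set L) (x : L), x ∈ Cn X → ∃ A : Set L, A.Finite ∧ A ⊆ X ∧ x ∈ Cn A)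
    (hImp : ∃ imp : L → L → L, ∀ (a b : L) (X : Set L), b ∈ Cn (X ∪ {a}) ↔ imp a b ∈ Cn X)
    (hSup : FinSupra Cn F) (hLA : FinLeftAb Cn F) (hRA : FinRightAb Cn F)
    (hDed : FinDeduc Cn F)
    (hExt : ∀ A : Set L, A.Finite → C A = F A)
    (hCsup : Supra Cn C) (hCla : LeftAb Cn C) (hCra : RightAb Cn C) (hCded : Deduc Cn C)
    (hCcpt : CompactOp C) (hCcc : CoCompact Cn C) :
    ∀ (X : Set L) (x : L),
      x ∈ C X ↔ ∃ A : Set L, A.Finite ∧ A ⊆ X ∧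
        ∀ B : Set L, B.Finite → B ⊆ Cn X → x ∈ F (A ∪ B) :=
  stmt18_general Cn F C hIncl hMono hIdem hCnCpt hImp hSup hLA hRA hDed hExt hCsup hCla hCra hCcpt
    hCcc

end DedNonmon
end

section
/- Let F be a finitary operation that is supraclassical, left-absorbing, right-absorbing, deductive and cumulative, and let C be its unique supraclassical, left-absorbing, right-absorbing, deductive, compact and co-compact extension, given by C(X) = Cn(X ∪ ⋂_{B finite, B ⊆ Cn(X)} F(B)). Then C is cumulative: whenever Y ⊆ Cn(C(X)) one has Cn(C(X ∪ Y)) = Cn(C(X)). -/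
/-!
Write `K X = ⋂ {F B | B ⊆ Cn X finite}`, so that `C X = Cn (X ∪ K X)`. The heart of the proof is
that `K X ⊆ F E` for every finite `E ⊆ C X`. By compactness `E ⊆ Cn (X ∪ Z)` for a finite
`Z ⊆ K X`, and the deduction theorem turns each `e ∈ E` into an implication `d_e = (Z → e) ∈ Cn X`.
For `D = {d_e}` this gives `K X ⊆ F D`, hence `E ⊆ Cn (F D)`; since also `Cn (D ∪ E) = Cn E`,
finitary cumulativity and the two absorption laws yield `F D = F E`.
So if `Y ⊆ C X`, then every finite `B ⊆ Cn (X ∪ Y) ⊆ C X` satisfies `K X ⊆ F B`, whence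
`K (X ∪ Y) = K X` and `C (X ∪ Y) = Cn (X ∪ Y ∪ K X) = C X`.
-/

open Set

namespace DedNonmon

variable {L : Type*}

def finCore (Cn F : Set L → Set L) (X : Set L) : Set L :=
  ⋂ (B : Set L) (_ : B.Finite) (_ : B ⊆ Cn X), F B

theorem mem_finCore {Cn F : Set L → Set L} {X : Set L} {w : L} :
    w ∈ finCore Cn F X ↔ ∀ B : Set L, B.Finite → B ⊆ Cn X → w ∈ F B := by
  simp only [finCore, mem_iInter]

theorem finCore_anti {Cn F : Set L → Set L} {X Y : Set L} (h : Cn X ⊆ Cn Y) :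
    finCore Cn F Y ⊆ finCore Cn F X := fun _ hw =>
  mem_finCore.2 fun B hB hBX => mem_finCore.1 hw B hB (hBX.trans h)

theorem FinCumul.eq_of_subset_closure {Cn : ClosureOperator (Set L)} {F : Set L → Set L}
    (hCum : FinCumul Cn F) (hLA : FinLeftAb Cn F) (hRA : FinRightAb Cn F)
    {D E : Set L} (hD : D.Finite) (hE : E.Finite) (hDE : D ⊆ Cn E) (hED : E ⊆ Cn (F D)) :
    F D = F E := by
  have hCnDE : Cn (D ∪ E) = Cn E :=
    (Cn.le_closure_iff.1 (union_subset hDE (Cn.le_closure E))).antisymm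
      (Cn.monotone subset_union_right)
  calc F D = Cn (F D) := (hLA D hD).symm
    _ = Cn (F (D ∪ E)) := (hCum D E hD hE hED).symm
    _ = Cn (F E) := by rw [hRA _ _ (hD.union hE) hE hCnDE]
    _ = F E := hLA E hE

section Closure

variable (Cn : ClosureOperator (Set L))

theorem exists_finite_subset_of_subset_closure_union
    (hCpt : ∀ (X : Set L) (x : L), x ∈ Cn X → ∃ A : Set L, A.Finite ∧ A ⊆ X ∧ x ∈ Cn A)
    {X K E : Set L} (hE : E.Finite) (hEXK : E ⊆ Cn (X ∪ K)) :
    ∃ Z ⊆ K, Z.Finite ∧ E ⊆ Cn (X ∪ Z) := by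
  have hmem : ∀ e ∈ E, ∃ Z ⊆ K, Z.Finite ∧ e ∈ Cn (X ∪ Z) := by
    intro e he
    obtain ⟨A, hA, hAXK, heA⟩ := hCpt _ e (hEXK he)
    refine ⟨A ∩ K, inter_subset_right, hA.inter_of_left K, Cn.monotone ?_ heA⟩
    intro a ha
    rcases hAXK ha with haX | haK
    exacts [Or.inl haX, Or.inr ⟨ha, haK⟩]
  choose! Z hZK hZ heZ using hmem
  refine ⟨⋃ e ∈ E, Z e, iUnion₂_subset hZK, hE.biUnion hZ, fun e he => ?_⟩
  exact Cn.monotone (union_subset_union_right X (subset_biUnion_of_mem he)) (heZ e he)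

variable {Cn} {imp : L → L → L} (himp : ∀ (a b : L) (X : Set L), b ∈ Cn (X ∪ {a}) ↔ imp a b ∈ Cn X)
include himp

/-- The deduction theorem for finitely many premises: `d` is the iterated implication
`z₁ → (z₂ → ⋯ → e)` over the members of `Z`. -/
theorem exists_mem_closure_of_mem_closure_union {Z S : Set L} {e : L} (hZ : Z.Finite)
    (he : e ∈ Cn (S ∪ Z)) : ∃ d ∈ Cn S, d ∈ Cn {e} ∧ e ∈ Cn (insert d Z) := by
  induction Z, hZ using Set.Finite.induction_on generalizing S with
  | empty => exact ⟨e, by simpa using he, Cn.le_closure _ rfl, Cn.le_closure _ (mem_insert e ∅)⟩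
  | @insert a Z _ _ ih =>
    rw [union_insert, ← union_singleton, union_right_comm] at he
    obtain ⟨d, hdSa, hde, hedZ⟩ := ih he
    refine ⟨imp a d, (himp a d S).1 hdSa, (himp a d {e}).1 (Cn.monotone subset_union_left hde), ?_⟩
    have hd : d ∈ Cn (insert (imp a d) (insert a Z)) :=
      Cn.monotone (by simp [insert_subset_iff]) ((himp a d {imp a d}).2 (Cn.le_closure _ rfl))
    refine Cn.le_closure_iff.1 (insert_subset hd ?_) hedZ
    exact (subset_insert _ _).trans ((subset_insert _ _).trans (Cn.le_closure _))

end Closure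

section Extension

variable {Cn : ClosureOperator (Set L)} {F : Set L → Set L}
  (hCpt : ∀ (X : Set L) (x : L), x ∈ Cn X → ∃ A : Set L, A.Finite ∧ A ⊆ X ∧ x ∈ Cn A)
  {imp : L → L → L} (himp : ∀ (a b : L) (X : Set L), b ∈ Cn (X ∪ {a}) ↔ imp a b ∈ Cn X)
  (hSup : FinSupra Cn F) (hLA : FinLeftAb Cn F) (hRA : FinRightAb Cn F) (hCum : FinCumul Cn F)
include hCpt himp hSup hLA hRA hCum

theorem finCore_subset_of_subset_closure {X E : Set L} (hE : E.Finite)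
    (hEX : E ⊆ Cn (X ∪ finCore Cn F X)) : finCore Cn F X ⊆ F E := by
  obtain ⟨Z, hZK, hZ, hEXZ⟩ := exists_finite_subset_of_subset_closure_union Cn hCpt hE hEX
  have hded : ∀ e ∈ E, ∃ d ∈ Cn X, d ∈ Cn {e} ∧ e ∈ Cn (insert d Z) := fun e he =>
    exists_mem_closure_of_mem_closure_union himp hZ (hEXZ he)
  choose! d hdX hde hedZ using hded
  have hD : (d '' E).Finite := hE.image d
  have hKD : finCore Cn F X ⊆ F (d '' E) := fun w hw =>
    mem_finCore.1 hw _ hD (image_subset_iff.2 hdX)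
  have hDE : d '' E ⊆ Cn E := image_subset_iff.2 fun e he =>
    Cn.monotone (singleton_subset_iff.2 he) (hde e he)
  have hED : E ⊆ Cn (F (d '' E)) := fun e he => by
    have hdD : d e ∈ F (d '' E) := hSup _ hD (Cn.le_closure _ (mem_image_of_mem d he))
    exact Cn.le_closure_iff.1 ((insert_subset hdD (hZK.trans hKD)).trans (Cn.le_closure _))
      (hedZ e he)
  exact hKD.trans (hCum.eq_of_subset_closure hLA hRA hD hE hDE hED).le

theorem finCore_union_eq {X Y : Set L} (hY : Y ⊆ Cn (X ∪ finCore Cn F X)) :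
    finCore Cn F (X ∪ Y) = finCore Cn F X := by
  refine (finCore_anti (Cn.monotone subset_union_left)).antisymm fun w hw =>
    mem_finCore.2 fun B hB hBXY => ?_
  have hXY : X ∪ Y ⊆ Cn (X ∪ finCore Cn F X) :=
    union_subset (subset_union_left.trans (Cn.le_closure _)) hY
  exact finCore_subset_of_subset_closure hCpt himp hSup hLA hRA hCum hB
    (hBXY.trans (Cn.le_closure_iff.1 hXY)) hw

theorem cumul_of_finCumul {C : Set L → Set L} (hC : ∀ X, C X = Cn (X ∪ finCore Cn F X)) :
    Cumul Cn C := by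
  intro X Y hY
  rw [hC, Cn.idempotent] at hY
  rw [hC, hC, Cn.idempotent, Cn.idempotent,
    finCore_union_eq hCpt himp hSup hLA hRA hCum hY, union_right_comm]
  exact (Cn.le_closure_iff.1 (union_subset (Cn.le_closure _) hY)).antisymm
    (Cn.monotone subset_union_left)

end Extension

theorem stmt19_general (Cn F C : Set L → Set L)
    (hIncl : ∀ X : Set L, X ⊆ Cn X)
    (hMono : ∀ X Y : Set L, X ⊆ Y → Cn X ⊆ Cn Y)
    (hIdem : ∀ X : Set L, Cn (Cn X) = Cn X)
    (hCnCpt : ∀ (X : Set L) (x : L), x ∈ Cn X → ∃ A : Set L, A.Finite ∧ A ⊆ X ∧ x ∈ Cn A)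
    (hImp : ∃ imp : L → L → L, ∀ (a b : L) (X : Set L), b ∈ Cn (X ∪ {a}) ↔ imp a b ∈ Cn X)
    (hSup : FinSupra Cn F) (hLA : FinLeftAb Cn F) (hRA : FinRightAb Cn F)
    (hCum : FinCumul Cn F)
    (hC : ∀ X : Set L, C X = Cn (X ∪ ⋂ (B : Set L) (_ : B.Finite) (_ : B ⊆ Cn X), F B)) :
    Cumul Cn C := by
  obtain ⟨imp, himp⟩ := hImp
  let Cn' : ClosureOperator (Set L) := .mk' Cn hMono hIncl fun X => (hIdem X).le
  exact cumul_of_finCumul (Cn := Cn') hCnCpt himp hSup hLA hRA hCum hC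

theorem stmt19 (Cn F C : Set L → Set L)
    (hIncl : ∀ X : Set L, X ⊆ Cn X)
    (hMono : ∀ X Y : Set L, X ⊆ Y → Cn X ⊆ Cn Y)
    (hIdem : ∀ X : Set L, Cn (Cn X) = Cn X)
    (hCnCpt : ∀ (X : Set L) (x : L), x ∈ Cn X → ∃ A : Set L, A.Finite ∧ A ⊆ X ∧ x ∈ Cn A)
    (hImp : ∃ imp : L → L → L, ∀ (a b : L) (X : Set L), b ∈ Cn (X ∪ {a}) ↔ imp a b ∈ Cn X)
    (hSup : FinSupra Cn F) (hLA : FinLeftAb Cn F) (hRA : FinRightAb Cn F)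
    (hDed : FinDeduc Cn F) (hCum : FinCumul Cn F)
    (hC : ∀ X : Set L, C X = Cn (X ∪ ⋂ (B : Set L) (_ : B.Finite) (_ : B ⊆ Cn X), F B)) :
    Cumul Cn C :=
  stmt19_general Cn F C hIncl hMono hIdem hCnCpt hImp hSup hLA hRA hCum hC

end DedNonmon
end
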